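/- arXiv:1005.5431 — 10 statements merged into one kernel-verified Lean document; each statement's English description precedes it below -/
import Mathlib

section
/- Let n > 1 and let R = ℤ[x₁,x₂]/⟨x₁^(n+1), x₂(a·x₁ + x₂)⟩ for an integer a. If there is a graded ring isomorphism ℤ[x₁,x₂]/⟨x₁^(n+1), x₂(a·x₁+x₂)⟩ ≅ ℤ[x₁,x₂]/⟨x₁^(n+1), x₂(a'·x₁+x₂)⟩, then |a| = |a'|. Conversely if |a| = |a'| the rings are isomorphic. -/
/-!
A degree-preserving substitution `g` is linear, `g i = ∑ j, M i j • X j`, and surjectivity of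
`aeval g` forces `det M` to be a unit. Since `n + 1 > 2`, the degree-two elements of
`⟨x₁ ^ (n + 1), Q_a⟩`, where `Q_a = x₂ (a x₁ + x₂)`, are the multiples of `Q_a`; applied to `g` and
to the inverse inclusion this gives `g (Q_a) = b • Q_{a'}` with `b = ±1`. Evaluating this identity
at `(1, 0)`, `(0, 1)` and `(1, 1)` yields `a · det M = ± b a'`. Conversely `x₂ ↦ -x₂` turns `Q_a`
into `Q_{-a}`.
-/

open MvPolynomial

/-- A graded ring isomorphism between `ℤ[x₁,x₂]/I` and `ℤ[x₁,x₂]/J` (generators in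
degree 2) corresponds to a degree-preserving automorphism of the polynomial ring,
i.e. a linear (degree-one) substitution, which is bijective and carries `I` onto `J`. -/
def IsGradedIso (I J : Ideal (MvPolynomial (Fin 2) ℤ)) : Prop :=
  ∃ g : Fin 2 → MvPolynomial (Fin 2) ℤ,
    (∀ i, (g i).IsHomogeneous 1) ∧
    Function.Bijective ⇑(MvPolynomial.aeval (R := ℤ) g) ∧
    Ideal.map (MvPolynomial.aeval (R := ℤ) g) I = J

namespace MvPolynomial

variable {σ τ R : Type*} [CommRing R]

theorem homogeneousComponent_aeval {g : σ → MvPolynomial τ R}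
    (hg : ∀ i, (g i).IsHomogeneous 1) (k : ℕ) (f : MvPolynomial σ R) :
    homogeneousComponent k (aeval g f) = aeval g (homogeneousComponent k f) := by
  induction f using MvPolynomial.induction_on' with
  | monomial d c =>
    have hd : (monomial d c).IsHomogeneous d.degree := isHomogeneous_monomial c rfl
    have hd' := hd.aeval g hg
    rw [one_mul] at hd'
    rw [homogeneousComponent_of_mem hd, homogeneousComponent_of_mem hd']
    split_ifs <;> simp
  | add p q hp hq => simp only [map_add, hp, hq]

theorem coeff_single_sum_C_mul_X [Fintype σ] (a : σ → R) (j : σ) :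
    coeff (Finsupp.single j 1) (∑ i, C (a i) * X i) = a j := by
  classical
  simp [coeff_sum, coeff_C_mul, coeff_X, Finsupp.single_left_inj]

theorem IsHomogeneous.eq_sum_C_mul_X [Fintype σ] {f : MvPolynomial σ R} (hf : f.IsHomogeneous 1) :
    f = ∑ i, C (coeff (Finsupp.single i 1) f) * X i := by
  classical
  have hspan : f ∈ Submodule.span R (Set.range X) := by
    rw [← homogeneousSubmodule_one_eq_span_X]; exact hf
  obtain ⟨c, rfl⟩ := Submodule.mem_span_range_iff_exists_fun R |>.mp hspan
  simp only [smul_eq_C_mul, coeff_single_sum_C_mul_X]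


theorem isUnit_det_of_surjective_aeval_linear [Fintype σ] [DecidableEq σ] (M : Matrix σ σ R)
    (hM : Function.Surjective (aeval fun i ↦ ∑ j, C (M i j) * X j :
      MvPolynomial σ R →ₐ[R] MvPolynomial σ R)) :
    IsUnit M.det := by
  set g : σ → MvPolynomial σ R := fun i ↦ ∑ j, C (M i j) * X j
  have hg (i : σ) : (g i).IsHomogeneous 1 :=
    IsHomogeneous.sum _ _ _ fun j _ ↦ isHomogeneous_C_mul_X _ _
  -- The linear part of a preimage of `X k` gives the `k`-th row of a left inverse of `M`.
  choose h hh using fun k ↦ hM (X k)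
  refine Matrix.isUnit_det_of_left_inverse (B := .of fun k i ↦ coeff (.single i 1) (h k)) ?_
  ext k j
  have hX : X k = aeval g (homogeneousComponent 1 (h k)) := by
    rw [← homogeneousComponent_aeval hg, hh, homogeneousComponent_eq_self (isHomogeneous_X R k)]
  rw [(homogeneousComponent_isHomogeneous (n := 1) (φ := h k)).eq_sum_C_mul_X] at hX
  have := congrArg (coeff (.single j 1)) hX
  simp only [map_sum, map_mul, aeval_C, aeval_X, coeff_sum, algebraMap_eq, coeff_C_mul, g,
    coeff_homogeneousComponent, Finsupp.degree_single, if_true] at this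
  simpa [Matrix.mul_apply, Matrix.one_apply, coeff_X, Finsupp.single_left_inj, eq_comm]
    using this.symm

attribute [local instance] MvPolynomial.gradedAlgebra in
theorem IsHomogeneous.homogeneousComponent_mul_of_lt {A G : MvPolynomial σ R} {m k : ℕ}
    (hG : G.IsHomogeneous m) (hkm : k < m) : homogeneousComponent k (A * G) = 0 := by
  rw [← decomposition.decompose'_apply]
  exact DirectSum.coe_decompose_mul_of_right_mem_of_not_le (homogeneousSubmodule σ R) (a := A) hG
    (by omega)

attribute [local instance] MvPolynomial.gradedAlgebra in
theorem IsHomogeneous.homogeneousComponent_mul {A Q : MvPolynomial σ R} {k : ℕ}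
    (hQ : Q.IsHomogeneous k) : homogeneousComponent k (A * Q) = C (coeff 0 A) * Q := by
  have h := DirectSum.coe_decompose_mul_of_right_mem_of_le (homogeneousSubmodule σ R) (a := A) hQ
    le_rfl
  rw [Nat.sub_self] at h
  rwa [← homogeneousComponent_zero, ← decomposition.decompose'_apply,
    ← decomposition.decompose'_apply]

theorem IsHomogeneous.exists_eq_C_mul_of_mem_span_pair {G Q f : MvPolynomial σ R} {m k : ℕ}
    (hG : G.IsHomogeneous m) (hQ : Q.IsHomogeneous k) (hkm : k < m) (hf : f.IsHomogeneous k)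
    (hmem : f ∈ Ideal.span {G, Q}) : ∃ b, f = C b * Q := by
  obtain ⟨A, B, rfl⟩ := Ideal.mem_span_pair.mp hmem
  refine ⟨coeff 0 B, ?_⟩
  rw [← homogeneousComponent_eq_self hf, map_add,
    hG.homogeneousComponent_mul_of_lt hkm, hQ.homogeneousComponent_mul, zero_add]

theorem exists_isUnit_aeval_eq_C_mul {g : σ → MvPolynomial σ R}
    (hg : ∀ i, (g i).IsHomogeneous 1) {G G' Q Q' : MvPolynomial σ R} {m k : ℕ}
    (hG : G.IsHomogeneous m) (hG' : G'.IsHomogeneous m) (hQ : Q.IsHomogeneous k)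
    (hQ' : Q'.IsHomogeneous k) (hkm : k < m) {v : σ → R} (hv : eval v Q' = 1)
    (hmap : Ideal.map (aeval g) (Ideal.span {G, Q}) = Ideal.span {G', Q'}) :
    ∃ b, IsUnit b ∧ aeval g Q = C b * Q' := by
  have hgQ : (aeval g Q).IsHomogeneous k := by simpa using hQ.aeval g hg
  obtain ⟨b, hb⟩ := hG'.exists_eq_C_mul_of_mem_span_pair hQ' hkm hgQ
    (hmap ▸ Ideal.mem_map_of_mem _ (Ideal.subset_span (by simp)))
  have hback : Q' ∈ Ideal.span {aeval g G, C b * Q'} := by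
    rw [← hb, ← Set.image_pair, ← Ideal.map_span, hmap]
    exact Ideal.subset_span (by simp)
  obtain ⟨c, hc⟩ := (hG.aeval g hg).exists_eq_C_mul_of_mem_span_pair (hQ'.C_mul b) (by simpa)
    hQ' hback
  have hcb := congrArg (eval v) hc
  simp only [map_mul, eval_C, hv, mul_one] at hcb
  exact ⟨b, IsUnit.of_mul_eq_one_right c hcb.symm, hb⟩

end MvPolynomial

-- The values at `(1, 0)`, `(0, 1)`, `(1, 1)` of `g (Q_a) = b • Q_{a'}`, where
-- `g 0 = p x₁ + q x₂` and `g 1 = r x₁ + s x₂`.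
theorem abs_eq_abs_of_quadric_relations {p q r s a a' b : ℤ} (hb : IsUnit b)
    (hdet : IsUnit (p * s - q * r)) (h₁₀ : r * (a * p + r) = 0) (h₀₁ : s * (a * q + s) = b)
    (h₁₁ : (r + s) * (a * (p + q) + (r + s)) = b * (a' + 1)) :
    |a| = |a'| := by
  have hmixed : a * (p * s - q * r) = b * a' ∨ a * (p * s - q * r) = -(b * a') := by
    rcases mul_eq_zero.mp h₁₀ with hr | hr
    · left; subst hr; linear_combination h₁₁ - h₀₁
    · right; linear_combination (2 * s + r) * hr - h₁₁ + h₀₁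
  have habs : |a| * |p * s - q * r| = |b| * |a'| := by
    rw [← abs_mul, ← abs_mul]
    rcases hmixed with h | h <;> rw [h]
    exact abs_neg _
  rwa [Int.isUnit_iff_abs_eq.mp hb, Int.isUnit_iff_abs_eq.mp hdet, mul_one, one_mul] at habs

theorem isHomogeneous_X_mul_C_mul_X_add_X {R : Type*} [CommRing R] (a : R) :
    (X 1 * (C a * X 0 + X 1) : MvPolynomial (Fin 2) R).IsHomogeneous 2 :=
  (isHomogeneous_X R 1).mul ((isHomogeneous_C_mul_X a 0).add (isHomogeneous_X R 1))

theorem abs_eq_abs_of_isGradedIso {n : ℕ} (hn : 1 < n) {a a' : ℤ}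
    (h : IsGradedIso
      (Ideal.span {(X 0 : MvPolynomial (Fin 2) ℤ) ^ (n + 1), X 1 * (C a * X 0 + X 1)})
      (Ideal.span {(X 0 : MvPolynomial (Fin 2) ℤ) ^ (n + 1), X 1 * (C a' * X 0 + X 1)})) :
    |a| = |a'| := by
  obtain ⟨g, hg, hbij, hmap⟩ := h
  obtain ⟨b, hbu, hb⟩ := exists_isUnit_aeval_eq_C_mul hg (isHomogeneous_X_pow 0 (n + 1))
    (isHomogeneous_X_pow 0 (n + 1)) (isHomogeneous_X_mul_C_mul_X_add_X a)
    (isHomogeneous_X_mul_C_mul_X_add_X a') (by omega) (v := ![0, 1]) (by simp) hmap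
  set M : Matrix (Fin 2) (Fin 2) ℤ := .of fun i j ↦ coeff (.single j 1) (g i)
  have hgM : g = fun i ↦ ∑ j, C (M i j) * X j := funext fun i ↦ (hg i).eq_sum_C_mul_X
  have hdet := isUnit_det_of_surjective_aeval_linear M (hgM ▸ hbij.2)
  rw [Matrix.det_fin_two] at hdet
  have hvalue (v : Fin 2 → ℤ) := congrArg (eval v) hb
  simp only [hgM, Fin.sum_univ_two, map_mul, map_add, aeval_X, aeval_C, algebraMap_eq, eval_C,
    eval_X] at hvalue
  have h₁₀ := hvalue ![1, 0]
  have h₀₁ := hvalue ![0, 1]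
  have h₁₁ := hvalue ![1, 1]
  simp only [Matrix.cons_val_zero, Matrix.cons_val_one, Matrix.cons_val_fin_one] at h₁₀ h₀₁ h₁₁
  exact abs_eq_abs_of_quadric_relations hbu hdet (by linear_combination h₁₀)
    (by linear_combination h₀₁) (by linear_combination h₁₁)

theorem aeval_X_zero_C_mul_X_one_involutive {R : Type*} [CommRing R] {e : R} (he : e * e = 1) :
    Function.Involutive (aeval ![X 0, C e * X 1] : MvPolynomial (Fin 2) R →ₐ[R] _) := by
  suffices (aeval ![X 0, C e * X 1]).comp (aeval ![X 0, C e * X 1]) = AlgHom.id R _ from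
    fun f ↦ DFunLike.congr_fun this f
  refine algHom_ext fun i ↦ ?_
  fin_cases i
  · simp
  · simp [← mul_assoc, ← C_mul, he]

theorem isGradedIso_of_abs_eq (n : ℕ) {a a' : ℤ} (h : |a| = |a'|) :
    IsGradedIso
      (Ideal.span {(X 0 : MvPolynomial (Fin 2) ℤ) ^ (n + 1), X 1 * (C a * X 0 + X 1)})
      (Ideal.span {(X 0 : MvPolynomial (Fin 2) ℤ) ^ (n + 1), X 1 * (C a' * X 0 + X 1)}) := by
  obtain ⟨e, he, rfl⟩ : ∃ e : ℤ, e * e = 1 ∧ a' = e * a := by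
    rcases abs_eq_abs.mp h with h | h
    exacts [⟨1, by ring, by omega⟩, ⟨-1, by ring, by omega⟩]
  refine ⟨![X 0, C e * X 1], fun i ↦ ?_, (aeval_X_zero_C_mul_X_one_involutive he).bijective, ?_⟩
  · fin_cases i
    exacts [isHomogeneous_X ℤ 0, isHomogeneous_C_mul_X e 1]
  · rw [Ideal.map_span, Set.image_pair]
    congr 3
    · simp
    · simp only [map_mul, map_add, aeval_X, aeval_C, algebraMap_eq, Matrix.cons_val_zero,
        Matrix.cons_val_one, Matrix.cons_val_fin_one]
      have hC : (C e * C e : MvPolynomial (Fin 2) ℤ) = 1 := by rw [← C_mul, he, C_1]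
      linear_combination X 1 ^ 2 * hC

theorem stmt0 (n : ℕ) (hn : 1 < n) (a a' : ℤ) :
    IsGradedIso
      (Ideal.span {(X 0 : MvPolynomial (Fin 2) ℤ) ^ (n + 1), X 1 * (C a * X 0 + X 1)})
      (Ideal.span {(X 0 : MvPolynomial (Fin 2) ℤ) ^ (n + 1), X 1 * (C a' * X 0 + X 1)})
    ↔ |a| = |a'| :=
  ⟨abs_eq_abs_of_isGradedIso hn, isGradedIso_of_abs_eq n⟩
end

section
/- Let n be an even positive integer and suppose g₁₁, g₁₂ are integers with (g₁₁, g₁₂) ≠ (0,0), r, s are integers with 1 ≤ r, s ≤ n, d₁,…,dₙ ∈ {0,1} with d₁ = 1, and c₁,…,cₙ ∈ {0,2} with c₁ = 2. Then the polynomial identity (g₁₁y₁ + g₁₂y₂)^(n+1) = g₁₁^(n+1)·y₁·∏ᵢ(y₁ + dᵢy₂) + g₁₂^(n+1)·y₂·∏ⱼ(cⱼy₁ + y₂) in ℤ[y₁,y₂] is impossible. (More generally it is impossible for any n > 1 under the constraint g₁₁g₂₂ − g₁₂g₂₁ = ±1 for some completion to a unimodular matrix, but the stated special case already follows from evaluating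 at (1,1) and (1,−1).) -/
/-!
Evaluate the identity at `(1, 1)` and `(1, -1)`. Write `a = g₁₁`, `b = g₁₂` and `N = n + 1` (odd);
`P = ∏ (1 + dᵢ)` is a product of `1`s and `2`s, `Q = ∏ (cⱼ + 1)` a product of `1`s and `3`s with at
least one `3`, and `ε = ∏ (cⱼ - 1) = ±1`. This gives `(a + b)^N = a^N P + b^N Q` and
`(a - b)^N = -ε b^N` (the `d₁ = 1` factor kills the first product at `(1, -1)`). Oddness of `N`
turns the second equation into `a - b = -ε b`. If `ε = 1` then `a = 0` and `b^N = b^N Q` with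
`Q ≠ 1`; if `ε = -1` then `a = 2b`, and `b ≠ 0` would give `3^N = 2^N P + Q`, impossible modulo `3`.
-/

open MvPolynomial

lemma not_three_dvd_prod_one_add {ι : Type*} (s : Finset ι) {d : ι → ℤ}
    (hd : ∀ i, d i = 0 ∨ d i = 1) : ¬ (3 : ℤ) ∣ ∏ i ∈ s, (1 + d i) :=
  Int.prime_three.not_dvd_finsetProd fun i _ => by
    rcases hd i with h | h <;> rw [h] <;> decide

lemma isUnit_prod_sub_one {ι : Type*} (s : Finset ι) {c : ι → ℤ}
    (hc : ∀ j, c j = 0 ∨ c j = 2) : IsUnit (∏ j ∈ s, (c j - 1)) :=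
  IsUnit.prod_iff.mpr fun j _ => by
    rcases hc j with h | h <;> rw [h] <;> decide

lemma eq_zero_of_add_pow_eq_of_sub_pow_eq {N : ℕ} (hN : Odd N) {a b P Q ε : ℤ}
    (hP : ¬ 3 ∣ P) (hQ : 3 ∣ Q) (hε : IsUnit ε)
    (h_add : (a + b) ^ N = a ^ N * P + b ^ N * Q) (h_sub : (a - b) ^ N = -(b ^ N * ε)) :
    a = 0 ∧ b = 0 := by
  have hN0 : N ≠ 0 := hN.pos.ne'
  rcases Int.isUnit_iff.mp hε with rfl | rfl
  · have ha : a = 0 := by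
      have : a - b = -b := hN.pow_inj.mp (by rw [h_sub, hN.neg_pow, mul_one])
      linarith
    subst ha
    have hQ1 : Q - 1 ≠ 0 := sub_ne_zero.mpr <| by rintro rfl; norm_num at hQ
    have : b ^ N * (Q - 1) = 0 := by
      rw [zero_add, zero_pow hN0] at h_add
      linear_combination -h_add
    exact ⟨rfl, pow_eq_zero_iff hN0 |>.mp ((mul_eq_zero.mp this).resolve_right hQ1)⟩
  · have ha : a = 2 * b := by
      have : a - b = b := hN.pow_inj.mp (by rw [h_sub]; ring)
      linarith
    subst ha
    suffices hb : b = 0 by simp [hb]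
    by_contra hb
    have h3 : (3 : ℤ) ^ N = 2 ^ N * P + Q :=
      mul_left_cancel₀ (pow_ne_zero N hb) (by linear_combination h_add)
    have : (3 : ℤ) ∣ 2 ^ N * P := by
      rw [show (2 : ℤ) ^ N * P = 3 ^ N - Q by linarith]
      exact dvd_sub (dvd_pow_self 3 hN0) hQ
    rcases Int.prime_three.dvd_mul.mp this with h2 | h3P
    · exact absurd (Int.prime_three.dvd_of_dvd_pow h2) (by decide)
    · exact hP h3P

lemma eval_of_add_pow_eq {n : ℕ} {g11 g12 : ℤ} {d c : Fin n → ℤ}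
    (h : (C g11 * X 0 + C g12 * X 1 : MvPolynomial (Fin 2) ℤ) ^ (n + 1) =
      C (g11 ^ (n + 1)) * X 0 * ∏ i, (X 0 + C (d i) * X 1) +
      C (g12 ^ (n + 1)) * X 1 * ∏ j, (C (c j) * X 0 + X 1)) (x y : ℤ) :
    (g11 * x + g12 * y) ^ (n + 1) =
      g11 ^ (n + 1) * x * ∏ i, (x + d i * y) + g12 ^ (n + 1) * y * ∏ j, (c j * x + y) := by
  simpa using congrArg (eval ![x, y]) h

theorem stmt1_general (n : ℕ) (hn : 0 < n) (hne : Even n)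
    (g11 g12 : ℤ) (hg : ¬(g11 = 0 ∧ g12 = 0))
    (d c : Fin n → ℤ)
    (hd : ∀ i, d i = 0 ∨ d i = 1) (hd1 : d ⟨0, hn⟩ = 1)
    (hc : ∀ j, c j = 0 ∨ c j = 2) (hc1 : c ⟨0, hn⟩ = 2) :
    ¬((C g11 * X 0 + C g12 * X 1 : MvPolynomial (Fin 2) ℤ) ^ (n + 1) =
        C (g11 ^ (n + 1)) * X 0 * ∏ i, (X 0 + C (d i) * X 1) +
        C (g12 ^ (n + 1)) * X 1 * ∏ j, (C (c j) * X 0 + X 1)) := by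
  intro h
  have h_add := eval_of_add_pow_eq h 1 1
  have h_sub := eval_of_add_pow_eq h 1 (-1)
  simp only [mul_one] at h_add
  simp only [mul_one, mul_neg, ← sub_eq_add_neg] at h_sub
  have h_vanish : ∏ i, (1 - d i) = 0 :=
    Finset.prod_eq_zero (Finset.mem_univ ⟨0, hn⟩) (by rw [hd1, sub_self])
  have h3Q : (3 : ℤ) ∣ ∏ j, (c j + 1) := by
    simpa [hc1] using Finset.dvd_prod_of_mem (fun j => c j + 1) (Finset.mem_univ ⟨0, hn⟩)
  exact hg <| eq_zero_of_add_pow_eq_of_sub_pow_eq hne.add_one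
    (not_three_dvd_prod_one_add _ hd) h3Q (isUnit_prod_sub_one _ hc) h_add
    (by rw [h_sub, h_vanish]; ring)

theorem stmt1 (n : ℕ) (hn : 0 < n) (hne : Even n)
    (g11 g12 : ℤ) (hg : ¬(g11 = 0 ∧ g12 = 0))
    (r s : ℕ) (hr1 : 1 ≤ r) (hrn : r ≤ n) (hs1 : 1 ≤ s) (hsn : s ≤ n)
    (d c : Fin n → ℤ)
    (hd : ∀ i, d i = 0 ∨ d i = 1) (hd1 : d ⟨0, hn⟩ = 1)
    (hc : ∀ j, c j = 0 ∨ c j = 2) (hc1 : c ⟨0, hn⟩ = 2) :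
    ¬((C g11 * X 0 + C g12 * X 1 : MvPolynomial (Fin 2) ℤ) ^ (n + 1) =
        C (g11 ^ (n + 1)) * X 0 * ∏ i, (X 0 + C (d i) * X 1) +
        C (g12 ^ (n + 1)) * X 1 * ∏ j, (C (c j) * X 0 + X 1)) :=
  stmt1_general n hn hne g11 g12 hg d c hd hd1 hc hc1
end

section
/- For integers g₁₁, g₁₂ (not both zero), positive integers r, s, n with 1 ≤ r, s ≤ n, the system of equations (g₁₁+g₁₂)^(n+1) = 2^r·g₁₁^(n+1) + 3^s·g₁₂^(n+1) and (g₁₁−g₁₂)^(n+1) = −g₁₂^(n+1)·(−1)^(n+1−s) has no integer solution. -/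
theorem stmt2 (n r s : ℕ) (g11 g12 : ℤ) (hg : ¬(g11 = 0 ∧ g12 = 0))
    (hr1 : 1 ≤ r) (hrn : r ≤ n) (hs1 : 1 ≤ s) (hsn : s ≤ n)
    (h1 : (g11 + g12) ^ (n + 1) = 2 ^ r * g11 ^ (n + 1) + 3 ^ s * g12 ^ (n + 1))
    (h2 : (g11 - g12) ^ (n + 1) = -(g12 ^ (n + 1)) * (-1) ^ (n + 1 - s)) :
    False := by
  -- from h2, absolute values
  have habs : |g11 - g12| ^ (n + 1) = |g12| ^ (n + 1) := by
    have h := congrArg abs h2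
    rw [abs_mul, abs_pow, abs_neg, abs_pow] at h
    simpa [abs_pow] using h
  have habs' : |g11 - g12| = |g12| :=
    (pow_left_inj₀ (abs_nonneg _) (abs_nonneg _) (by omega : n + 1 ≠ 0)).mp habs
  rcases abs_eq_abs.mp habs' with hc | hc
  · -- g11 = 2 * g12
    have hg11 : g11 = 2 * g12 := by linarith
    have hg12 : g12 ≠ 0 := by
      intro h; apply hg; constructor <;> [skip; exact h]; rw [hg11, h]; ring
    subst hg11
    have key : (3:ℤ) ^ (n + 1) = 2 ^ (r + n + 1) + 3 ^ s := by
      have hp : (g12 : ℤ) ^ (n + 1) ≠ 0 := pow_ne_zero _ hg12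
      have : (3:ℤ) ^ (n+1) * g12 ^ (n+1) = (2 ^ (r+n+1) + 3 ^ s) * g12 ^ (n+1) := by
        have e1 : (2 * g12 + g12) = 3 * g12 := by ring
        rw [e1, mul_pow, mul_pow] at h1
        have e2 : (2:ℤ) ^ (r+n+1) = 2 ^ r * 2 ^ (n+1) := by rw [← pow_add]; ring_nf
        rw [e2]
        linear_combination h1
      exact mul_right_cancel₀ hp this
    have hd : (3:ℤ) ∣ 2 ^ (r + n + 1) := by
      have h3s : (3:ℤ) ∣ 3 ^ s := dvd_pow_self 3 (by omega)
      have h3n : (3:ℤ) ∣ 3 ^ (n+1) := dvd_pow_self 3 (by omega)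
      omega
    have := (Int.Prime.dvd_pow' (by norm_num) hd : (3:ℤ) ∣ 2)
    norm_num at this
  · -- g11 = 0
    have hg11 : g11 = 0 := by linarith
    subst hg11
    have hg12 : g12 ≠ 0 := fun h => hg ⟨rfl, h⟩
    have hp : (g12 : ℤ) ^ (n + 1) ≠ 0 := pow_ne_zero _ hg12
    simp at h1
    have : (3:ℤ) ^ s = 1 := by
      have : (1:ℤ) * g12 ^ (n+1) = 3 ^ s * g12 ^ (n+1) := by linarith
      have := mul_right_cancel₀ hp this
      omega
    have h3 : (3:ℤ) ^ s ≥ 3 ^ 1 := pow_le_pow_right₀ (by norm_num) hs1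
    simp at h3; omega
end

section
/- Let n > 1 be odd. In the graded ring H = ℤ[x₁,x₂]/⟨x₁ⁿ(x₁+2x₂), x₂(x₁+x₂)⟩, for all integers c, d one has (c·x₁ + d·x₂)^(n+1) = (c^(n+1) + (d−c)^(n+1))·x₂^(n+1), and consequently (c·x₁+d·x₂)^(n+1) = 0 implies c = d = 0. -/
/-!
Write `x = x₁`, `y = x₂` and `u = x + y`. The relation `y * u = 0` makes `u` and `y` orthogonal, so
powers of sums of their multiples split; for odd `n` the other relation `(u - y) ^ n * (u + y) = 0`
then expands to `u ^ (n + 1) = y ^ (n + 1)`. Since `c * x + d * y = c * u + (d - c) * y`, this gives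
the formula, and as `n + 1` is even the coefficient `c ^ (n + 1) + (d - c) ^ (n + 1)` vanishes only
for `c = d = 0`. Finally `m * y ^ (n + 1) ≠ 0` in `H` for `m ≠ 0`, which two evaluations of the
relations into `ℤ[t]` detect.
-/

open MvPolynomial

section Orthogonal

variable {R : Type*} [CommRing R]

theorem add_pow_of_mul_eq_zero {a b : R} (h : a * b = 0) {n : ℕ} (hn : n ≠ 0) :
    (a + b) ^ n = a ^ n + b ^ n := by
  obtain ⟨m, rfl⟩ := Nat.exists_eq_add_one_of_ne_zero hn
  clear hn
  induction m with
  | zero => simp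
  | succ k ih =>
    rw [pow_succ, ih]
    linear_combination (a ^ k + b ^ k) * h

variable {x y : R} {n : ℕ}

theorem add_pow_succ_eq_pow_succ (hn : Odd n) (hx : x ^ n * (x + 2 * y) = 0)
    (hy : y * (x + y) = 0) : (x + y) ^ (n + 1) = y ^ (n + 1) := by
  obtain ⟨k, rfl⟩ := hn
  have hxn : x ^ (2 * k + 1) = (x + y) ^ (2 * k + 1) - y ^ (2 * k + 1) := by
    have := add_pow_of_mul_eq_zero (a := x + y) (b := -y) (by linear_combination -hy)
      (n := 2 * k + 1) (Nat.add_one_ne_zero _)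
    rwa [add_neg_cancel_right, (odd_two_mul_add_one k).neg_pow, ← sub_eq_add_neg] at this
  linear_combination hx - (x + 2 * y) * hxn - ((x + y) ^ (2 * k) - y ^ (2 * k)) * hy

theorem linear_form_pow_succ_eq (hn : Odd n) (hx : x ^ n * (x + 2 * y) = 0)
    (hy : y * (x + y) = 0) (c d : R) :
    (c * x + d * y) ^ (n + 1) = (c ^ (n + 1) + (d - c) ^ (n + 1)) * y ^ (n + 1) := by
  have horth : c * (x + y) * ((d - c) * y) = 0 := by linear_combination c * (d - c) * hy
  calc (c * x + d * y) ^ (n + 1) = (c * (x + y) + (d - c) * y) ^ (n + 1) := by ring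
    _ = (c * (x + y)) ^ (n + 1) + ((d - c) * y) ^ (n + 1) :=
      add_pow_of_mul_eq_zero horth n.succ_ne_zero
    _ = (c ^ (n + 1) + (d - c) ^ (n + 1)) * y ^ (n + 1) := by
      rw [mul_pow, mul_pow, add_pow_succ_eq_pow_succ hn hx hy]
      ring

end Orthogonal

theorem eq_zero_of_pow_add_sub_pow_eq_zero {k : ℕ} (hk : Even k) (hk0 : k ≠ 0) {c d : ℤ}
    (h : c ^ k + (d - c) ^ k = 0) : c = 0 ∧ d = 0 := by
  obtain ⟨hc, hdc⟩ := (add_eq_zero_iff_of_nonneg (hk.pow_nonneg c) (hk.pow_nonneg (d - c))).1 h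
  have hc := pow_eq_zero_iff hk0 |>.1 hc
  have hdc := pow_eq_zero_iff hk0 |>.1 hdc
  omega

theorem MvPolynomial.eval_zero_aeval_congr {σ R : Type*} [CommRing R] {v w : σ → Polynomial R}
    (h : ∀ i, (v i).eval 0 = (w i).eval 0) (p : MvPolynomial σ R) :
    (aeval v p).eval 0 = (aeval w p).eval 0 := by
  rw [← Polynomial.coe_aeval_eq_eval, comp_aeval_apply, comp_aeval_apply]
  simp only [Polynomial.coe_aeval_eq_eval, h]

noncomputable abbrev relIdeal (n : ℕ) : Ideal (MvPolynomial (Fin 2) ℤ) :=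
  Ideal.span {X 0 ^ n * (X 0 + 2 * X 1), X 1 * (X 0 + X 1)}

theorem mk_linear_form_pow_succ {n : ℕ} (hn : Odd n) (c d : ℤ) :
    Ideal.Quotient.mk (relIdeal n) (C c * X 0 + C d * X 1) ^ (n + 1) =
      Ideal.Quotient.mk (relIdeal n) (C (c ^ (n + 1) + (d - c) ^ (n + 1)) * X 1 ^ (n + 1)) := by
  have hx : Ideal.Quotient.mk (relIdeal n) (X 0 ^ n * (X 0 + 2 * X 1)) = 0 :=
    Ideal.Quotient.eq_zero_iff_mem.2 (Ideal.subset_span (Set.mem_insert _ _))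
  have hy : Ideal.Quotient.mk (relIdeal n) (X 1 * (X 0 + X 1)) = 0 :=
    Ideal.Quotient.eq_zero_iff_mem.2 (Ideal.subset_span (Set.mem_insert_of_mem _ rfl))
  simp only [map_add, map_mul, map_pow, map_sub, map_ofNat] at hx hy ⊢
  exact linear_form_pow_succ_eq hn hx hy _ _

/-- Evaluating at `(x, y) = (-t, t)` and at `(t, 0)` kills `y * (x + y)` and turns
`x ^ n * (x + 2 * y)` into `∓ t ^ (n + 1)`, so the coefficient `a` of that generator maps to `-m`
and to `0`; both evaluations agree at `t = 0`. -/
theorem eq_zero_of_C_mul_X_one_pow_mem_relIdeal {n : ℕ} (hn : Odd n) {m : ℤ}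
    (hm : C m * X 1 ^ (n + 1) ∈ relIdeal n) : m = 0 := by
  obtain ⟨a, b, hab⟩ := Ideal.mem_span_pair.1 hm
  set v : Fin 2 → Polynomial ℤ := ![-Polynomial.X, Polynomial.X]
  set w : Fin 2 → Polynomial ℤ := ![Polynomial.X, 0]
  have hva : aeval v a = -(m : Polynomial ℤ) := by
    have hv := congrArg (aeval v) hab
    simp only [v, map_add, map_mul, map_pow, map_ofNat, eq_intCast, map_intCast, aeval_X,
      Matrix.cons_val_zero, Matrix.cons_val_one, hn.neg_pow] at hv
    refine mul_right_cancel₀ (pow_ne_zero (n + 1) Polynomial.X_ne_zero) ?_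
    linear_combination -hv
  have hwa : aeval w a = 0 := by simpa [w] using congrArg (aeval w) hab
  have hconst := eval_zero_aeval_congr (v := v) (w := w) (by intro i; fin_cases i <;> simp [v, w]) a
  simpa [hva, hwa] using hconst

theorem stmt3_general (n : ℕ) (hodd : Odd n) (c d : ℤ) :
    (Ideal.Quotient.mk
        (Ideal.span {(X 0 : MvPolynomial (Fin 2) ℤ) ^ n * (X 0 + 2 * X 1), X 1 * (X 0 + X 1)})
        (C c * X 0 + C d * X 1)) ^ (n + 1) =
      Ideal.Quotient.mk
        (Ideal.span {(X 0 : MvPolynomial (Fin 2) ℤ) ^ n * (X 0 + 2 * X 1), X 1 * (X 0 + X 1)})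
        (C (c ^ (n + 1) + (d - c) ^ (n + 1)) * X 1 ^ (n + 1)) ∧
    ((Ideal.Quotient.mk
        (Ideal.span {(X 0 : MvPolynomial (Fin 2) ℤ) ^ n * (X 0 + 2 * X 1), X 1 * (X 0 + X 1)})
        (C c * X 0 + C d * X 1)) ^ (n + 1) = 0 → c = 0 ∧ d = 0) := by
  have hpow := mk_linear_form_pow_succ hodd c d
  refine ⟨hpow, fun h => ?_⟩
  rw [hpow, Ideal.Quotient.eq_zero_iff_mem] at h
  exact eq_zero_of_pow_add_sub_pow_eq_zero hodd.add_one n.succ_ne_zero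
    (eq_zero_of_C_mul_X_one_pow_mem_relIdeal hodd h)

theorem stmt3 (n : ℕ) (hn : 1 < n) (hodd : Odd n) (c d : ℤ) :
    (Ideal.Quotient.mk
        (Ideal.span {(X 0 : MvPolynomial (Fin 2) ℤ) ^ n * (X 0 + 2 * X 1), X 1 * (X 0 + X 1)})
        (C c * X 0 + C d * X 1)) ^ (n + 1) =
      Ideal.Quotient.mk
        (Ideal.span {(X 0 : MvPolynomial (Fin 2) ℤ) ^ n * (X 0 + 2 * X 1), X 1 * (X 0 + X 1)})
        (C (c ^ (n + 1) + (d - c) ^ (n + 1)) * X 1 ^ (n + 1)) ∧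
    ((Ideal.Quotient.mk
        (Ideal.span {(X 0 : MvPolynomial (Fin 2) ℤ) ^ n * (X 0 + 2 * X 1), X 1 * (X 0 + X 1)})
        (C c * X 0 + C d * X 1)) ^ (n + 1) = 0 → c = 0 ∧ d = 0) :=
  stmt3_general n hodd c d
end

section
/- Let n > 1 be odd and let a, b be integers with ab = 2. Then the graded ring ℤ[x₁,x₂]/⟨x₁^(n+1), x₂(a'x₁+x₂)⟩ (for any integer a') is not isomorphic as a graded ring to ℤ[x₁,x₂]/⟨x₁^(n+1−1)(x₁+2x₂), x₂(x₁+x₂)⟩ nor to ℤ[y₁,y₂]/⟨y₁ⁿ(y₁+y₂), y₂(2y₁+y₂)⟩. -/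
open MvPolynomial

/-!
A graded isomorphism sends `X 0` to a nonzero linear form `p` with `p ^ (n + 1) = 0` in the target
ring, so it suffices to rule out such forms there. Both targets are `ℤ[x₀, x₁] / (f, g)` with
`f = x₀ⁿ (x₀ + r x₁)`, `g = x₁ (s x₀ + x₁)` and `r s = 2`. The relation `g` vanishes on the lines
`x₁ = 0` and `x₁ = -s x₀`, where `f` restricts to `x₀ⁿ⁺¹` and `(1 - r s) x₀ⁿ⁺¹ = -x₀ⁿ⁺¹`.
Comparing degree-`(n + 1)` components of `p ^ (n + 1) = A f + B g` at `(1, 0)` and `(1, -s)` gives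
`p(1, 0) ^ (n + 1) = a` and `p(1, -s) ^ (n + 1) = -a` for one integer `a`; since `n + 1` is even,
both values vanish, and so does `p`.
-/

namespace MvPolynomial

variable {σ R : Type*} [CommRing R]

attribute [local instance] gradedAlgebra in
theorem homogeneousComponent_mul_of_isHomogeneous {g : MvPolynomial σ R} {m : ℕ}
    (hg : g.IsHomogeneous m) (A : MvPolynomial σ R) (k : ℕ) [Decidable (m ≤ k)] :
    homogeneousComponent k (A * g) =
      if m ≤ k then homogeneousComponent (k - m) A * g else 0 := by
  simp only [← decomposition.decompose'_apply, DirectSum.Decomposition.decompose'_eq]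
  exact DirectSum.coe_decompose_mul_of_right_mem _ k hg

theorem exists_forall_eval_eq_mul_of_mem_span_pair {P f g : MvPolynomial σ R} {k m : ℕ}
    (hP : P.IsHomogeneous k) (hf : f.IsHomogeneous k) (hg : g.IsHomogeneous m)
    (hPfg : P ∈ Ideal.span {f, g}) :
    ∃ a : R, ∀ v : σ → R, eval v g = 0 → eval v P = a * eval v f := by
  classical
  obtain ⟨A, B, rfl⟩ := Ideal.mem_span_pair.mp hPfg
  refine ⟨coeff 0 A, fun v hv ↦ ?_⟩
  rw [← homogeneousComponent_eq_self hP, map_add, homogeneousComponent_mul_of_isHomogeneous hf,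
    homogeneousComponent_mul_of_isHomogeneous hg, if_pos le_rfl, Nat.sub_self,
    homogeneousComponent_zero]
  split_ifs <;> simp [hv]

theorem IsHomogeneous.exists_eq_sum_smul_X [Fintype σ] {p : MvPolynomial σ R}
    (hp : p.IsHomogeneous 1) : ∃ c : σ → R, p = ∑ i, c i • X i := by
  have hmem : p ∈ Submodule.span R (Set.range X) := by
    rw [← homogeneousSubmodule_one_eq_span_X]
    exact hp
  obtain ⟨c, hc⟩ := (Submodule.mem_span_range_iff_exists_fun R).mp hmem
  exact ⟨c, hc.symm⟩

end MvPolynomial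

theorem not_isGradedIso_of_pow_mem {I J : Ideal (MvPolynomial (Fin 2) ℤ)} {i : Fin 2} {k : ℕ}
    (hI : X i ^ k ∈ I) (hJ : ∀ p : MvPolynomial (Fin 2) ℤ, p.IsHomogeneous 1 → p ^ k ∈ J → p = 0) :
    ¬ IsGradedIso I J := by
  rintro ⟨g, hg, hbij, rfl⟩
  have hgi : g i = 0 := hJ _ (hg i) (by simpa using Ideal.mem_map_of_mem (aeval g) hI)
  exact X_ne_zero i (hbij.1 (by simp [hgi]))

theorem eq_zero_of_pow_mem_span {n : ℕ} (hn : Odd n) {r s : ℤ} (hrs : r * s = 2)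
    {p : MvPolynomial (Fin 2) ℤ} (hp : p.IsHomogeneous 1)
    (hmem : p ^ (n + 1) ∈ Ideal.span {X 0 ^ n * (X 0 + C r * X 1), X 1 * (C s * X 0 + X 1)}) :
    p = 0 := by
  have hP : (p ^ (n + 1)).IsHomogeneous (n + 1) := by simpa using hp.pow (n + 1)
  have hf : (X 0 ^ n * (X 0 + C r * X 1) : MvPolynomial (Fin 2) ℤ).IsHomogeneous (n + 1) :=
    (isHomogeneous_X_pow 0 n).mul ((isHomogeneous_X ℤ 0).add ((isHomogeneous_X ℤ 1).C_mul r))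
  have hg : (X 1 * (C s * X 0 + X 1) : MvPolynomial (Fin 2) ℤ).IsHomogeneous 2 :=
    (isHomogeneous_X ℤ 1).mul (((isHomogeneous_X ℤ 0).C_mul s).add (isHomogeneous_X ℤ 1))
  obtain ⟨a, ha⟩ := exists_forall_eval_eq_mul_of_mem_span_pair hP hf hg hmem
  have h₀ := ha ![1, 0] (by simp)
  have h₁ := ha ![1, -s] (by simp)
  obtain ⟨c, rfl⟩ := hp.exists_eq_sum_smul_X
  simp only [zsmul_eq_mul, Fin.sum_univ_two, Fin.isValue, map_pow, map_add, map_mul, map_intCast,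
    Int.cast_eq, eval_X, Matrix.cons_val_zero, mul_one, Matrix.cons_val_one,
    Matrix.cons_val_fin_one, mul_zero, add_zero, eq_intCast, one_pow, mul_neg, one_mul] at h₀ h₁
  rw [hrs] at h₁
  have hsum : c 0 ^ (n + 1) + (c 0 + -(c 1 * s)) ^ (n + 1) = 0 := by linarith
  have heven : Even (n + 1) := hn.add_one
  obtain ⟨hpow₀, hpow₁⟩ :=
    (add_eq_zero_iff_of_nonneg (heven.pow_nonneg _) (heven.pow_nonneg _)).mp hsum
  have hc0 : c 0 = 0 := pow_eq_zero_iff n.succ_ne_zero |>.mp hpow₀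
  have hs : s ≠ 0 := right_ne_zero_of_mul (hrs ▸ two_ne_zero)
  have hc1 : c 1 = 0 := by
    simpa [hc0, hs] using pow_eq_zero_iff n.succ_ne_zero |>.mp hpow₁
  simp [Fin.sum_univ_two, hc0, hc1]

theorem stmt6_general (n : ℕ) (hodd : Odd n) (a' : ℤ) :
    ¬ IsGradedIso
        (Ideal.span {(X 0 : MvPolynomial (Fin 2) ℤ) ^ (n + 1), X 1 * (C a' * X 0 + X 1)})
        (Ideal.span {(X 0 : MvPolynomial (Fin 2) ℤ) ^ n * (X 0 + 2 * X 1), X 1 * (X 0 + X 1)}) ∧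
    ¬ IsGradedIso
        (Ideal.span {(X 0 : MvPolynomial (Fin 2) ℤ) ^ (n + 1), X 1 * (C a' * X 0 + X 1)})
        (Ideal.span {(X 0 : MvPolynomial (Fin 2) ℤ) ^ n * (X 0 + X 1), X 1 * (2 * X 0 + X 1)}) := by
  have hI : (X 0 : MvPolynomial (Fin 2) ℤ) ^ (n + 1) ∈
      Ideal.span {X 0 ^ (n + 1), X 1 * (C a' * X 0 + X 1)} :=
    Ideal.subset_span (Set.mem_insert _ _)
  constructor
  · refine not_isGradedIso_of_pow_mem hI fun p hp hmem ↦
      eq_zero_of_pow_mem_span hodd (r := 2) (s := 1) (by norm_num) hp ?_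
    simpa using hmem
  · refine not_isGradedIso_of_pow_mem hI fun p hp hmem ↦
      eq_zero_of_pow_mem_span hodd (r := 1) (s := 2) (by norm_num) hp ?_
    simpa using hmem

theorem stmt6 (n : ℕ) (hn : 1 < n) (hodd : Odd n) (a b : ℤ) (hab : a * b = 2) (a' : ℤ) :
    ¬ IsGradedIso
        (Ideal.span {(X 0 : MvPolynomial (Fin 2) ℤ) ^ (n + 1), X 1 * (C a' * X 0 + X 1)})
        (Ideal.span {(X 0 : MvPolynomial (Fin 2) ℤ) ^ n * (X 0 + 2 * X 1), X 1 * (X 0 + X 1)}) ∧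
    ¬ IsGradedIso
        (Ideal.span {(X 0 : MvPolynomial (Fin 2) ℤ) ^ (n + 1), X 1 * (C a' * X 0 + X 1)})
        (Ideal.span {(X 0 : MvPolynomial (Fin 2) ℤ) ^ n * (X 0 + X 1), X 1 * (2 * X 0 + X 1)}) :=
  stmt6_general n hodd a'
end

section
/- For positive integers n, m, s, s' with n > m, 1 ≤ s, s' ≤ m, suppose φ̄ : ℤ[x₁,x₂] → ℤ[y₁,y₂] is a grading-preserving ring isomorphism (with all generators of degree 2) and α a nonzero integer such that φ̄(x₂^(m+1−s)(2x₁+x₂)^s) = α·y₂^(m+1−s')(2y₁+y₂)^(s'). Then s = s' or s + s' = m + 1. -/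
/-!
Dehomogenize by `x₁ ↦ X`, `x₂ ↦ 1`. The images of the linear forms `φ̄(x₂)` and `φ̄(2x₁ + x₂)`
then have degrees `u, v ≤ 1`, while the right-hand side becomes `α (2X + 1)^s'`, of degree `s'`.
Hence `(m + 1 - s) u + s v = s'`, and since `1 ≤ s' ≤ m < (m + 1 - s) + s`, exactly one of `u, v`
equals `1`: either `s = s'` or `m + 1 - s = s'`.
-/

open MvPolynomial

theorem MvPolynomial.natDegree_aeval_le_one_of_isHomogeneous {σ R : Type*} [CommSemiring R]
    {φ : MvPolynomial σ R} (hφ : φ.IsHomogeneous 1) {f : σ → Polynomial R}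
    (hf : ∀ i, (f i).natDegree ≤ 1) : (aeval f φ).natDegree ≤ 1 := by
  have hφ_span : φ ∈ Submodule.span R (Set.range X) := by
    rwa [← homogeneousSubmodule_one_eq_span_X, mem_homogeneousSubmodule]
  have hmem : aeval f φ ∈ Polynomial.degreeLE R 1 := by
    have := Submodule.mem_map_of_mem (f := (aeval f).toLinearMap) hφ_span
    rw [Submodule.map_span, ← Set.range_comp] at this
    refine Submodule.span_le.mpr ?_ this
    rintro _ ⟨i, rfl⟩
    simpa [Polynomial.mem_degreeLE] using Polynomial.degree_le_of_natDegree_le (hf i)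
  exact Polynomial.natDegree_le_iff_degree_le.mpr (Polynomial.mem_degreeLE.mp hmem)

theorem Polynomial.natDegree_pow_mul_pow {R : Type*} [Semiring R] [NoZeroDivisors R]
    {A B : Polynomial R} {a b : ℕ} (h : A ^ a * B ^ b ≠ 0) :
    (A ^ a * B ^ b).natDegree = a * A.natDegree + b * B.natDegree := by
  rw [natDegree_mul (left_ne_zero_of_mul h) (right_ne_zero_of_mul h), natDegree_pow, natDegree_pow]

theorem stmt9_general (m s s' : ℕ)
    (hsm : s ≤ m) (hs'1 : 1 ≤ s') (hs'm : s' ≤ m)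
    (g : Fin 2 → MvPolynomial (Fin 2) ℤ)
    (hg : ∀ i, (g i).IsHomogeneous 1)
    (α : ℤ) (hα : α ≠ 0)
    (heq : MvPolynomial.aeval (R := ℤ) g ((X 1 : MvPolynomial (Fin 2) ℤ) ^ (m + 1 - s) * (2 * X 0 + X 1) ^ s)
        = C α * ((X 1 : MvPolynomial (Fin 2) ℤ) ^ (m + 1 - s') * (2 * X 0 + X 1) ^ s')) :
    s = s' ∨ s + s' = m + 1 := by
  set dehom := aeval (R := ℤ) ![(Polynomial.X : Polynomial ℤ), 1]
  have hdehom : ∀ φ : MvPolynomial (Fin 2) ℤ, φ.IsHomogeneous 1 → (dehom φ).natDegree ≤ 1 :=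
    fun φ hφ => natDegree_aeval_le_one_of_isHomogeneous hφ (by simp [Fin.forall_fin_two])
  have hQ : (2 * g 0 + g 1).IsHomogeneous 1 := by
    simpa using ((isHomogeneous_C _ (2 : ℤ)).mul (hg 0)).add (hg 1)
  have hlin : (2 * Polynomial.X + 1 : Polynomial ℤ).natDegree = 1 := by
    rw [← Polynomial.C_ofNat, ← Polynomial.C_1, Polynomial.natDegree_linear two_ne_zero]
  have key : dehom (g 1) ^ (m + 1 - s) * dehom (2 * g 0 + g 1) ^ s
      = Polynomial.C α * (2 * Polynomial.X + 1) ^ s' := by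
    simpa [dehom, map_ofNat] using congrArg dehom heq
  have hne : dehom (g 1) ^ (m + 1 - s) * dehom (2 * g 0 + g 1) ^ s ≠ 0 := by
    rw [key]
    exact mul_ne_zero (Polynomial.C_ne_zero.mpr hα)
      (pow_ne_zero _ (Polynomial.ne_zero_of_natDegree_gt (hlin ▸ zero_lt_one)))
  have hdeg := congrArg Polynomial.natDegree key
  rw [Polynomial.natDegree_pow_mul_pow hne, Polynomial.natDegree_C_mul hα,
    Polynomial.natDegree_pow, hlin, mul_one] at hdeg
  set u := (dehom (g 1)).natDegree
  set v := (dehom (2 * g 0 + g 1)).natDegree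
  have hu : u ≤ 1 := hdehom _ (hg 1)
  have hv : v ≤ 1 := hdehom _ hQ
  interval_cases u <;> interval_cases v <;> omega

theorem stmt9 (n m s s' : ℕ) (hmn : m < n)
    (hs1 : 1 ≤ s) (hsm : s ≤ m) (hs'1 : 1 ≤ s') (hs'm : s' ≤ m)
    (g : Fin 2 → MvPolynomial (Fin 2) ℤ)
    (hg : ∀ i, (g i).IsHomogeneous 1)
    (hbij : Function.Bijective ⇑(MvPolynomial.aeval (R := ℤ) g))
    (α : ℤ) (hα : α ≠ 0)
    (heq : MvPolynomial.aeval (R := ℤ) g ((X 1 : MvPolynomial (Fin 2) ℤ) ^ (m + 1 - s) * (2 * X 0 + X 1) ^ s)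
        = C α * ((X 1 : MvPolynomial (Fin 2) ℤ) ^ (m + 1 - s') * (2 * X 0 + X 1) ^ s')) :
    s = s' ∨ s + s' = m + 1 :=
  stmt9_general m s s' hsm hs'1 hs'm g hg α hα heq
end

section
/- Let n < m and 1 ≤ r ≤ n, 1 ≤ s ≤ m, 1 ≤ r' ≤ m, 1 ≤ s' ≤ n. Then there is no graded ring isomorphism between ℤ[x₁,x₂]/⟨x₁^(n+1−r)(x₁+x₂)^r, x₂^(m+1−s)(2x₁+x₂)^s⟩ and ℤ[y₁,y₂]/⟨y₁^(n+1−s')(y₁+2y₂)^(s'), y₂^(m+1−r')(y₁+y₂)^(r')⟩. -/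
/-!
A graded isomorphism is a linear substitution `φ` over `ℤ`. Comparing components of degree
`n + 1`, `φ` sends `x₀^(n+1-r) (x₀+x₁)^r` to a multiple of `x₀^(n+1-s') (x₀+2x₁)^s'`, since the
other target generator has the larger degree `m + 1`. Modulo 2 this multiple is `c x₀^(n+1)`,
so the images of the prime divisors `x₀` and `x₀+x₁` both divide a power of `x₀` and therefore
both vanish at `(0, 1)`. But `φ` stays bijective modulo 2, and a surjective substitution
separates points, so it cannot send both `(0, 1)` and `0` to `0`.
-/

open MvPolynomial

namespace MvPolynomial

variable {σ R : Type*} [CommRing R]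

theorem isHomogeneous_X_pow_mul_pow {L : MvPolynomial σ R} (hL : L.IsHomogeneous 1) (i : σ)
    {a b d : ℕ} (h : a + b = d) : (X i ^ a * L ^ b).IsHomogeneous d := by
  simpa [← h] using (isHomogeneous_X_pow i a).mul (hL.pow b)

theorem IsHomogeneous.homogeneousComponent_mul_of_lt_s10 {Q : MvPolynomial σ R} {e : ℕ}
    (hQ : Q.IsHomogeneous e) (u : MvPolynomial σ R) {d : ℕ} (hd : d < e) :
    homogeneousComponent d (u * Q) = 0 := by
  conv_lhs => rw [← sum_homogeneousComponent u, Finset.sum_mul, map_sum]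
  refine Finset.sum_eq_zero fun i _ => ?_
  rw [homogeneousComponent_of_mem ((homogeneousComponent_isHomogeneous i u).mul hQ),
    if_neg (by omega)]

theorem IsHomogeneous.homogeneousComponent_mul_eq_C_coeff_zero_mul {Q : MvPolynomial σ R} {e : ℕ}
    (hQ : Q.IsHomogeneous e) (u : MvPolynomial σ R) :
    homogeneousComponent e (u * Q) = C (coeff 0 u) * Q := by
  conv_lhs => rw [← sum_homogeneousComponent u, Finset.sum_mul, map_sum]
  rw [Finset.sum_eq_single 0 (fun i _ hi => ?_) (by simp), ← homogeneousComponent_zero,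
    homogeneousComponent_of_mem ((homogeneousComponent_isHomogeneous 0 u).mul hQ),
    if_pos (zero_add e).symm]
  rw [homogeneousComponent_of_mem ((homogeneousComponent_isHomogeneous i u).mul hQ),
    if_neg (by omega)]

theorem exists_eq_C_mul_of_mem_span_pair {f Q₁ Q₂ : MvPolynomial σ R} {d e : ℕ}
    (hf : f.IsHomogeneous d) (hQ₁ : Q₁.IsHomogeneous d) (hQ₂ : Q₂.IsHomogeneous e) (hde : d < e)
    (hmem : f ∈ Ideal.span {Q₁, Q₂}) : ∃ c, f = C c * Q₁ := by
  obtain ⟨u, v, rfl⟩ := Ideal.mem_span_pair.mp hmem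
  refine ⟨coeff 0 u, ?_⟩
  rw [← homogeneousComponent_eq_self hf, map_add,
    hQ₁.homogeneousComponent_mul_eq_C_coeff_zero_mul, hQ₂.homogeneousComponent_mul_of_lt_s10 v hde,
    add_zero]

theorem injective_eval_of_surjective_aeval {h : σ → MvPolynomial σ R}
    (hsurj : Function.Surjective (aeval (R := R) h)) :
    Function.Injective fun v : σ → R => fun i => eval v (h i) := by
  intro v w hvw
  funext j
  obtain ⟨q, hq⟩ := hsurj (X j)
  have key : ∀ x : σ → R, x j = eval (fun i => eval x (h i)) q := fun x => by
    simpa only [hq, aeval_X, aeval_eq_eval] using comp_aeval_apply (f := h) (aeval x) q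
  rw [key v, key w]
  exact congrArg (fun y => eval y q) hvw

theorem map_aeval_eq_aeval_map {S : Type*} [CommRing S] (f : R →+* S) (g : σ → MvPolynomial σ R)
    (q : MvPolynomial σ R) :
    map f (aeval g q) = aeval (fun i => map f (g i)) (map f q) := by
  rw [map_aeval, coe_eval₂Hom, aeval_def, eval₂_map]
  congr 1
  exact RingHom.ext fun r => map_C f r

theorem bijective_aeval_map {S : Type*} [CommRing S] {f : R →+* S} (hf : Function.Surjective f)
    {g : σ → MvPolynomial σ R} (hg : Function.Bijective (aeval (R := R) g)) :
    Function.Bijective (aeval (R := S) fun i => map f (g i)) := by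
  refine ⟨(injective_iff_map_eq_zero _).mpr fun y hy => ?_, fun y => ?_⟩
  · obtain ⟨x, rfl⟩ := map_surjective f hf y
    rw [← map_aeval_eq_aeval_map, ← RingHom.mem_ker, ker_map] at hy
    rw [← RingHom.mem_ker, ker_map]
    let e := AlgEquiv.ofBijective (aeval (R := R) g) hg
    -- `e.symm` is `R`-linear, so it preserves the extended ideal `ker f · R[σ] = ker (map f)`
    have he : Ideal.map (e.symm : MvPolynomial σ R →+* MvPolynomial σ R)
        (Ideal.map C (RingHom.ker f)) = Ideal.map C (RingHom.ker f) := by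
      rw [Ideal.map_map]
      congr 1
      exact e.symm.toAlgHom.comp_algebraMap
    rw [← he, ← e.symm_apply_apply x]
    exact Ideal.mem_map_of_mem _ hy
  · obtain ⟨x, rfl⟩ := map_surjective f hf y
    obtain ⟨q, rfl⟩ := hg.2 x
    exact ⟨map f q, (map_aeval_eq_aeval_map f g q).symm⟩

section Domain

variable [IsDomain R]

theorem eval_zero_one_eq_zero_of_dvd_C_mul_X_zero_pow {ℓ : MvPolynomial (Fin 2) R}
    (hℓ : ℓ.IsHomogeneous 1) {K : R} (hK : K ≠ 0) {N : ℕ} (hdvd : ℓ ∣ C K * X 0 ^ N) :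
    eval ![0, 1] ℓ = 0 := by
  have hmem : ℓ ∈ Submodule.span R (Set.range X) := by
    rw [← homogeneousSubmodule_one_eq_span_X]
    exact hℓ
  obtain ⟨c, rfl⟩ := (Submodule.mem_span_range_iff_exists_fun R).mp hmem
  obtain ⟨q, hq⟩ := hdvd
  -- the linear form vanishes at `(c 1, -c 0)`, where `X 0 ^ N` takes the value `c 1 ^ N`
  have hc : K * c 1 ^ N = 0 := by
    simpa [Fin.sum_univ_two, mul_comm (c 0)] using congrArg (eval ![c 1, -c 0]) hq
  simpa [Fin.sum_univ_two] using eq_zero_of_pow_eq_zero ((mul_eq_zero.mp hc).resolve_left hK)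

theorem aeval_X_pow_mul_X_add_X_pow_ne_C_mul_X_pow {h : Fin 2 → MvPolynomial (Fin 2) R}
    (hh : ∀ i, (h i).IsHomogeneous 1) (hbij : Function.Bijective (aeval (R := R) h))
    {p r : ℕ} (hp : p ≠ 0) (hr : r ≠ 0) (K : R) (N : ℕ) :
    aeval (R := R) h (X 0 ^ p * (X 0 + X 1) ^ r) ≠ C K * X 0 ^ N := by
  intro hKN
  have hne : aeval (R := R) h (X 0 ^ p * (X 0 + X 1) ^ r) ≠ 0 := by
    refine (map_ne_zero_iff _ hbij.1).mpr (mul_ne_zero (pow_ne_zero _ (X_ne_zero 0)) ?_)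
    exact pow_ne_zero _ fun h01 => by simpa using congrArg (eval ![1, 0]) h01
  have hK : K ≠ 0 := by
    rintro rfl
    rw [map_zero, zero_mul] at hKN
    exact hne hKN
  simp only [map_mul, map_pow, map_add, aeval_X] at hKN
  have h₀ : eval ![0, 1] (h 0) = 0 :=
    eval_zero_one_eq_zero_of_dvd_C_mul_X_zero_pow (hh 0) hK
      (hKN ▸ (dvd_pow_self _ hp).mul_right _)
  have h₀₁ : eval ![0, 1] (h 0 + h 1) = 0 :=
    eval_zero_one_eq_zero_of_dvd_C_mul_X_zero_pow ((hh 0).add (hh 1)) hK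
      (hKN ▸ (dvd_pow_self _ hr).mul_left _)
  have hconst : ∀ i, constantCoeff (h i) = 0 := fun i => by
    rw [constantCoeff_eq]
    exact (hh i).coeff_eq_zero (by simp)
  have hcollide := injective_eval_of_surjective_aeval hbij.2 (a₁ := ![0, 1]) (a₂ := 0) <| by
    funext i
    fin_cases i
    · simpa [hconst] using h₀
    · simpa [hconst, h₀] using h₀₁
  simpa using congrFun hcollide 1

end Domain

end MvPolynomial

theorem stmt10_general (n m r s r' s' : ℕ) (hnm : n < m)
    (hr1 : 1 ≤ r) (hrn : r ≤ n)
    (hr'm : r' ≤ m) (hs'n : s' ≤ n) :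
    ¬ IsGradedIso
        (Ideal.span {(X 0 : MvPolynomial (Fin 2) ℤ) ^ (n + 1 - r) * (X 0 + X 1) ^ r,
          X 1 ^ (m + 1 - s) * (2 * X 0 + X 1) ^ s})
        (Ideal.span {(X 0 : MvPolynomial (Fin 2) ℤ) ^ (n + 1 - s') * (X 0 + 2 * X 1) ^ s',
          X 1 ^ (m + 1 - r') * (X 0 + X 1) ^ r'}) := by
  rintro ⟨g, hg, hbij, hmap⟩
  have hX₀₁ : (X 0 + X 1 : MvPolynomial (Fin 2) ℤ).IsHomogeneous 1 :=
    (isHomogeneous_X ℤ 0).add (isHomogeneous_X ℤ 1)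
  have hX₀₂ : (X 0 + 2 * X 1 : MvPolynomial (Fin 2) ℤ).IsHomogeneous 1 :=
    (isHomogeneous_X ℤ 0).add (by simpa using isHomogeneous_C_mul_X (2 : ℤ) (1 : Fin 2))
  have hmem : aeval (R := ℤ) g (X 0 ^ (n + 1 - r) * (X 0 + X 1) ^ r) ∈ Ideal.span
      {X 0 ^ (n + 1 - s') * (X 0 + 2 * X 1) ^ s', X 1 ^ (m + 1 - r') * (X 0 + X 1) ^ r'} :=
    hmap ▸ Ideal.mem_map_of_mem _ (Ideal.subset_span (Set.mem_insert _ _))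
  have hP : (aeval (R := ℤ) g (X 0 ^ (n + 1 - r) * (X 0 + X 1) ^ r)).IsHomogeneous (n + 1) := by
    simpa using (isHomogeneous_X_pow_mul_pow hX₀₁ 0 (d := n + 1) (by omega)).aeval g hg
  obtain ⟨c, hc⟩ := exists_eq_C_mul_of_mem_span_pair hP
    (isHomogeneous_X_pow_mul_pow hX₀₂ 0 (a := n + 1 - s') (b := s') (d := n + 1) (by omega))
    (isHomogeneous_X_pow_mul_pow hX₀₁ 1 (a := m + 1 - r') (b := r') (d := m + 1) (by omega))
    (by omega) hmem
  -- modulo 2 that target generator becomes a power of `X 0`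
  have hbij₂ := bijective_aeval_map (f := Int.castRingHom (ZMod 2)) ZMod.intCast_surjective hbij
  refine aeval_X_pow_mul_X_add_X_pow_ne_C_mul_X_pow (fun i => (hg i).map _) hbij₂
    (p := n + 1 - r) (r := r) (by omega) (by omega) (c : ZMod 2) (n + 1) ?_
  have h2 : (2 : MvPolynomial (Fin 2) (ZMod 2)) = 0 := CharTwo.two_eq_zero
  simpa [map_aeval_eq_aeval_map, h2, ← pow_add, Nat.sub_add_cancel (by omega : s' ≤ n + 1)]
    using congrArg (map (Int.castRingHom (ZMod 2))) hc

theorem stmt10 (n m r s r' s' : ℕ) (hnm : n < m)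
    (hr1 : 1 ≤ r) (hrn : r ≤ n) (hs1 : 1 ≤ s) (hsm : s ≤ m)
    (hr'1 : 1 ≤ r') (hr'm : r' ≤ m) (hs'1 : 1 ≤ s') (hs'n : s' ≤ n) :
    ¬ IsGradedIso
        (Ideal.span {(X 0 : MvPolynomial (Fin 2) ℤ) ^ (n + 1 - r) * (X 0 + X 1) ^ r,
          X 1 ^ (m + 1 - s) * (2 * X 0 + X 1) ^ s})
        (Ideal.span {(X 0 : MvPolynomial (Fin 2) ℤ) ^ (n + 1 - s') * (X 0 + 2 * X 1) ^ s',
          X 1 ^ (m + 1 - r') * (X 0 + X 1) ^ r'}) :=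
  stmt10_general n m r s r' s' hnm hr1 hrn hr'm hs'n
end

section
/- Let n > 1 and b ∈ ℤⁿ. Consider the free T²-action on S^(2n+1) × S³ ⊂ ℂ^(n+1) × ℂ² given by (t₁,t₂)·(w₁,…,w_(n+1),z₁,z₂) = (t₁t₂^(b₁)w₁, t₁w₂,…, t₁w_(n+1), t₁^a t₂ z₁, t₂ z₂) with ab₁ = 2, b = (b₁,0,…,0), and the action with b' = (b₁,…,b₁) given analogously by (t₁t₂^(b₁)w₁,…,t₁t₂^(b₁)wₙ, t₁w_(n+1), t₁^a t₂ z₁, t₂ z₂). Then the map φ(w₁,…,w_(n+1),z₁,z₂) = (w_(n+1), w₂,…,wₙ, w₁, z₁, z̄₂) is a homeomorphism of S^(2n+1) × S³ satisfying φ(μ(t₁,t₂)·x) = μ'(t₁t₂^(b₁), t₂^(−1))·φ(x) for all (t₁,t₂) ∈ T² and x ∈ S^(2n+1)×S³. -/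
/-!
`φ` swaps `w₁` with `w_{n+1}` and conjugates `z₂`: a continuous involution preserving both sums
of squared moduli, so it restricts to a self-homeomorphism of `S^{2n+1} × S³`. Equivariance is
checked coordinatewise under the reparametrisation `(t₁, t₂) ↦ (t₁ t₂^{b₁}, t₂⁻¹)`: the weight
`t₁ t₂^{b₁}` becomes `t₁ t₂^{b₁} t₂^{-b₁} = t₁`, the weight on `z₁` becomes
`t₁^a t₂^{ab₁ - 1} = t₁^a t₂` since `ab₁ = 2`, and conjugation turns `t₂ z₂` into `t₂⁻¹ z̄₂`.
-/

open ComplexConjugate Function Set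

section CommGroup

variable {G : Type*} [CommGroup G]

theorem mul_zpow_mul_inv_zpow (t s : G) (b : ℤ) : t * s ^ b * s⁻¹ ^ b = t := by
  group

theorem mul_zpow_zpow_mul_inv {a b : ℤ} (hab : a * b = 2) (t s : G) :
    (t * s ^ b) ^ a * s⁻¹ = t ^ a * s := by
  rw [mul_zpow, ← zpow_mul, mul_comm b a, hab]
  group

end CommGroup

theorem exists_homeomorph_restrict_of_involutive {X : Type*} [TopologicalSpace X] {f : X → X}
    (hinv : Involutive f) (hf : Continuous f) {s : Set X} (hs : MapsTo f s s) :
    ∃ h : s ≃ₜ s, ∀ x : s, (h x : X) = f x :=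
  ⟨{ toFun := hs.restrict
     invFun := hs.restrict
     left_inv := fun x => Subtype.ext (hinv x)
     right_inv := fun x => Subtype.ext (hinv x)
     continuous_toFun := hf.restrict hs
     continuous_invFun := hf.restrict hs }, fun _ => rfl⟩

theorem Fin.swap_zero_last_val_eq_zero_iff {n : ℕ} (i : Fin (n + 1)) :
    (Equiv.swap 0 (Fin.last n) i).1 = 0 ↔ i = Fin.last n := by
  rw [Fin.val_eq_zero_iff, Equiv.swap_apply_eq_iff, Equiv.swap_apply_left]

namespace TorusQuotient

abbrev Ambient (n : ℕ) : Type := (Fin (n + 1) → ℂ) × (Fin 2 → ℂ)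

variable {n : ℕ}

def sphereProd (n : ℕ) : Set (Ambient n) :=
  {p | (∑ i, Complex.normSq (p.1 i)) = 1 ∧ (∑ j, Complex.normSq (p.2 j)) = 1}

def swapConj (n : ℕ) (p : Ambient n) : Ambient n :=
  (fun i => if i.1 = 0 then p.1 (Fin.last n) else if i = Fin.last n then p.1 0 else p.1 i,
   fun j => if j.1 = 1 then conj (p.2 j) else p.2 j)

noncomputable def act (a b : ℤ) (t₁ t₂ : Circle) (p : Ambient n) : Ambient n :=
  (fun i => if i.1 = 0 then ((t₁ : ℂ) * ((t₂ ^ b : Circle) : ℂ)) * p.1 i else (t₁ : ℂ) * p.1 i,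
   fun j => if j.1 = 0 then (((t₁ ^ a : Circle) : ℂ) * (t₂ : ℂ)) * p.2 j else (t₂ : ℂ) * p.2 j)

noncomputable def act' (a b : ℤ) (t₁ t₂ : Circle) (p : Ambient n) : Ambient n :=
  (fun i => if i = Fin.last n then (t₁ : ℂ) * p.1 i
    else ((t₁ : ℂ) * ((t₂ ^ b : Circle) : ℂ)) * p.1 i,
   fun j => if j.1 = 0 then (((t₁ ^ a : Circle) : ℂ) * (t₂ : ℂ)) * p.2 j else (t₂ : ℂ) * p.2 j)

theorem swapConj_fst (p : Ambient n) : (swapConj n p).1 = p.1 ∘ Equiv.swap 0 (Fin.last n) := by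
  funext i
  rcases eq_or_ne i 0 with rfl | hi₀
  · simp [swapConj]
  rcases eq_or_ne i (Fin.last n) with rfl | hiₗ
  · simp [swapConj, Fin.val_eq_zero_iff, hi₀]
  · simp [swapConj, Fin.val_eq_zero_iff, hi₀, hiₗ, Equiv.swap_apply_of_ne_of_ne]

theorem swapConj_snd_zero (p : Ambient n) : (swapConj n p).2 0 = p.2 0 := rfl

theorem swapConj_snd_one (p : Ambient n) : (swapConj n p).2 1 = conj (p.2 1) := rfl

theorem swapConj_involutive : Involutive (swapConj n) := by
  intro p
  ext1
  · rw [swapConj_fst, swapConj_fst, comp_assoc, ← Equiv.coe_trans, Equiv.swap_swap]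
    rfl
  · funext j
    fin_cases j
    · rfl
    · exact Complex.conj_conj _

theorem continuous_swapConj : Continuous (swapConj n) := by
  refine .prodMk (continuous_pi fun i => ?_) (continuous_pi fun j => ?_) <;>
    split_ifs <;> fun_prop

theorem mapsTo_swapConj_sphereProd : MapsTo (swapConj n) (sphereProd n) (sphereProd n) := by
  rintro p ⟨hw, hz⟩
  refine ⟨?_, ?_⟩
  · rw [swapConj_fst, ← hw]
    exact Equiv.sum_comp (Equiv.swap 0 (Fin.last n)) (fun i => Complex.normSq (p.1 i))
  · rw [← hz, Fin.sum_univ_two, Fin.sum_univ_two, swapConj_snd_zero, swapConj_snd_one,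
      Complex.normSq_conj]

theorem swapConj_act {a b : ℤ} (hab : a * b = 2) (t₁ t₂ : Circle) (p : Ambient n) :
    swapConj n (act a b t₁ t₂ p) = act' a b (t₁ * t₂ ^ b) t₂⁻¹ (swapConj n p) := by
  ext1
  · rw [swapConj_fst]
    funext i
    simp only [act, act', swapConj_fst, comp_apply, Fin.swap_zero_last_val_eq_zero_iff]
    split_ifs
    · rw [Circle.coe_mul]
    · rw [← Circle.coe_mul, mul_zpow_mul_inv_zpow]
  · funext j
    fin_cases j
    · change _ * _ = (_ * _) * _
      rw [← Circle.coe_mul, ← Circle.coe_mul, mul_zpow_zpow_mul_inv hab]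
      rfl
    · change conj (_ * _) = _ * conj _
      rw [map_mul, Circle.coe_inv_eq_conj]

end TorusQuotient

theorem stmt14_general (n : ℕ) (a b1 : ℤ) (hab : a * b1 = 2)
    (S : Set ((Fin (n + 1) → ℂ) × (Fin 2 → ℂ)))
    (hS : S = {p | (∑ i, Complex.normSq (p.1 i)) = 1 ∧ (∑ j, Complex.normSq (p.2 j)) = 1})
    (φ : ((Fin (n + 1) → ℂ) × (Fin 2 → ℂ)) → ((Fin (n + 1) → ℂ) × (Fin 2 → ℂ)))
    (hφ : ∀ p, φ p =
      (fun i => if i.1 = 0 then p.1 (Fin.last n)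
                else if i = Fin.last n then p.1 0 else p.1 i,
       fun j => if j.1 = 1 then starRingEnd ℂ (p.2 j) else p.2 j))
    (μ μ' : Circle → Circle →
      ((Fin (n + 1) → ℂ) × (Fin 2 → ℂ)) → ((Fin (n + 1) → ℂ) × (Fin 2 → ℂ)))
    (hμ : ∀ t1 t2 p, μ t1 t2 p =
      (fun i => if i.1 = 0 then ((t1 : ℂ) * ((t2 ^ b1 : Circle) : ℂ)) * p.1 i
                else (t1 : ℂ) * p.1 i,
       fun j => if j.1 = 0 then (((t1 ^ a : Circle) : ℂ) * (t2 : ℂ)) * p.2 j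
                else (t2 : ℂ) * p.2 j))
    (hμ' : ∀ t1 t2 p, μ' t1 t2 p =
      (fun i => if i = Fin.last n then (t1 : ℂ) * p.1 i
                else ((t1 : ℂ) * ((t2 ^ b1 : Circle) : ℂ)) * p.1 i,
       fun j => if j.1 = 0 then (((t1 ^ a : Circle) : ℂ) * (t2 : ℂ)) * p.2 j
                else (t2 : ℂ) * p.2 j)) :
    (∃ h : S ≃ₜ S, ∀ x : S, (h x : (Fin (n + 1) → ℂ) × (Fin 2 → ℂ)) = φ x) ∧
    (∀ (t1 t2 : Circle) (x : (Fin (n + 1) → ℂ) × (Fin 2 → ℂ)),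
      φ (μ t1 t2 x) = μ' (t1 * t2 ^ b1) t2⁻¹ (φ x)) := by
  obtain rfl : S = TorusQuotient.sphereProd n := hS
  obtain rfl : φ = TorusQuotient.swapConj n := funext hφ
  obtain rfl : μ = TorusQuotient.act a b1 := by
    funext t₁ t₂ p
    exact hμ t₁ t₂ p
  obtain rfl : μ' = TorusQuotient.act' a b1 := by
    funext t₁ t₂ p
    exact hμ' t₁ t₂ p
  exact ⟨exists_homeomorph_restrict_of_involutive TorusQuotient.swapConj_involutive
    TorusQuotient.continuous_swapConj TorusQuotient.mapsTo_swapConj_sphereProd,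
    fun t₁ t₂ => TorusQuotient.swapConj_act hab t₁ t₂⟩

theorem stmt14 (n : ℕ) (hn : 1 < n) (a b1 : ℤ) (hab : a * b1 = 2)
    (S : Set ((Fin (n + 1) → ℂ) × (Fin 2 → ℂ)))
    (hS : S = {p | (∑ i, Complex.normSq (p.1 i)) = 1 ∧ (∑ j, Complex.normSq (p.2 j)) = 1})
    (φ : ((Fin (n + 1) → ℂ) × (Fin 2 → ℂ)) → ((Fin (n + 1) → ℂ) × (Fin 2 → ℂ)))
    (hφ : ∀ p, φ p =
      (fun i => if i.1 = 0 then p.1 (Fin.last n)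
                else if i = Fin.last n then p.1 0 else p.1 i,
       fun j => if j.1 = 1 then starRingEnd ℂ (p.2 j) else p.2 j))
    (μ μ' : Circle → Circle →
      ((Fin (n + 1) → ℂ) × (Fin 2 → ℂ)) → ((Fin (n + 1) → ℂ) × (Fin 2 → ℂ)))
    (hμ : ∀ t1 t2 p, μ t1 t2 p =
      (fun i => if i.1 = 0 then ((t1 : ℂ) * ((t2 ^ b1 : Circle) : ℂ)) * p.1 i
                else (t1 : ℂ) * p.1 i,
       fun j => if j.1 = 0 then (((t1 ^ a : Circle) : ℂ) * (t2 : ℂ)) * p.2 j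
                else (t2 : ℂ) * p.2 j))
    (hμ' : ∀ t1 t2 p, μ' t1 t2 p =
      (fun i => if i = Fin.last n then (t1 : ℂ) * p.1 i
                else ((t1 : ℂ) * ((t2 ^ b1 : Circle) : ℂ)) * p.1 i,
       fun j => if j.1 = 0 then (((t1 ^ a : Circle) : ℂ) * (t2 : ℂ)) * p.2 j
                else (t2 : ℂ) * p.2 j)) :
    (∃ h : S ≃ₜ S, ∀ x : S, (h x : (Fin (n + 1) → ℂ) × (Fin 2 → ℂ)) = φ x) ∧
    (∀ (t1 t2 : Circle) (x : (Fin (n + 1) → ℂ) × (Fin 2 → ℂ)),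
      φ (μ t1 t2 x) = μ' (t1 * t2 ^ b1) t2⁻¹ (φ x)) :=
  stmt14_general n a b1 hab S hS φ hφ μ μ' hμ hμ'
end

section
/- Let s be an even positive integer with s ≤ n+1. Define φ : S^(2n+1) × S³ → S^(2n+1) × S³ (spheres in ℂ^(n+1) × ℂ²) by φ(w,z) = (z̄₁w₁ + z₂w̄₂, −z₂w̄₁ + z̄₁w₂, …, −z₂w̄_(s−1) + z̄₁wₛ, w̄_(s+1), …, w̄_(n+1), z̄₁, z̄₂). Then φ is a well-defined homeomorphism, and for the T²-action μ(t₁,t₂)·(w,z) = (t₁t₂w₁,…,t₁t₂wₛ, t₁w_(s+1),…,t₁w_(n+1), t₁²t₂z₁, t₂z₂) and the action μ'(t₁,t₂)·(w,z) = (t₁w₁,…,t₁w_(n+1), t₁²t₂z₁, t₂z₂), one has φ(μ(t₁,t₂)·x) = μ'(t₁^(−1), t₂^(−1))·φ(x). -/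
/-!
Pairing the first `s` coordinates as quaternions `w_{2k} + w_{2k+1} j`, the map `φ` multiplies
each pair on the left by the conjugate of the unit quaternion `z₁ + z₂ j` and conjugates the
remaining coordinates. So it preserves both norms, and multiplying back by `z₁ + z₂ j` gives a
continuous inverse. Equivariance is a coordinatewise computation using `|t₁| = |t₂| = 1`.
-/

/-- Extend a tuple `w : Fin (n+1) → ℂ` to a function on `ℕ` by zero,
to ease writing shifted indices. -/
noncomputable def extCoord (n : ℕ) (w : Fin (n + 1) → ℂ) (k : ℕ) : ℂ :=
  if h : k < n + 1 then w ⟨k, h⟩ else 0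

open ComplexConjugate

lemma extCoord_of_lt {n k : ℕ} {w : Fin (n + 1) → ℂ} (h : k < n + 1) :
    extCoord n w k = w ⟨k, h⟩ := dif_pos h

lemma sum_normSq_eq_sum_range_extCoord (n : ℕ) (w : Fin (n + 1) → ℂ) :
    ∑ i, Complex.normSq (w i) = ∑ k ∈ Finset.range (n + 1), Complex.normSq (extCoord n w k) := by
  rw [← Fin.sum_univ_eq_sum_range]
  exact Finset.sum_congr rfl fun i _ => by rw [extCoord_of_lt i.2]

lemma Finset.sum_range_two_mul {M : Type*} [AddCommMonoid M] (m : ℕ) (f : ℕ → M) :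
    ∑ k ∈ range (2 * m), f k = ∑ k ∈ range m, (f (2 * k) + f (2 * k + 1)) := by
  induction m with
  | zero => simp
  | succ m ih =>
    rw [Nat.mul_succ, sum_range_succ, sum_range_succ, sum_range_succ, ih, add_assoc]

lemma normSq_quat_add_normSq_quat (u v a b : ℂ) :
    Complex.normSq (conj u * a + v * conj b) + Complex.normSq (-v * conj a + conj u * b) =
      (Complex.normSq u + Complex.normSq v) * (Complex.normSq a + Complex.normSq b) := by
  simp only [Complex.normSq_apply, Complex.add_re, Complex.add_im, Complex.mul_re,
    Complex.mul_im, Complex.conj_re, Complex.conj_im, Complex.neg_re, Complex.neg_im]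
  ring

noncomputable def twist (n s : ℕ) (u v : ℂ) (w : Fin (n + 1) → ℂ) : Fin (n + 1) → ℂ :=
  fun i =>
    if i.1 < s then
      if i.1 % 2 = 0 then conj u * w i + v * conj (extCoord n w (i.1 + 1))
      else -v * conj (extCoord n w (i.1 - 1)) + conj u * w i
    else conj (w i)

section twist

variable {n s : ℕ} {u v : ℂ} {w : Fin (n + 1) → ℂ}

lemma twist_apply_two_mul {k : ℕ} (hk : 2 * k + 1 < s) (hsn : s ≤ n + 1) :
    twist n s u v w ⟨2 * k, by omega⟩ =
      conj u * w ⟨2 * k, by omega⟩ + v * conj (w ⟨2 * k + 1, by omega⟩) := by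
  simp only [twist, show 2 * k < s by omega, Nat.mul_mod_right, if_true,
    extCoord_of_lt (show 2 * k + 1 < n + 1 by omega)]

lemma twist_apply_two_mul_add_one {k : ℕ} (hk : 2 * k + 1 < s) (hsn : s ≤ n + 1) :
    twist n s u v w ⟨2 * k + 1, by omega⟩ =
      -v * conj (w ⟨2 * k, by omega⟩) + conj u * w ⟨2 * k + 1, by omega⟩ := by
  simp only [twist, hk, Nat.mul_add_mod_self_left, Nat.one_mod, one_ne_zero, if_true, if_false,
    Nat.add_sub_cancel, extCoord_of_lt (show 2 * k < n + 1 by omega)]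

lemma twist_apply_of_le {i : Fin (n + 1)} (hi : s ≤ i.1) : twist n s u v w i = conj (w i) := by
  simp only [twist, if_neg (not_lt.mpr hi)]

lemma twist_conj_neg_twist (hs : Even s) (hsn : s ≤ n + 1)
    (huv : Complex.normSq u + Complex.normSq v = 1) :
    twist n s (conj u) (-v) (twist n s u v w) = w := by
  have hunit : u * conj u + v * conj v = 1 := by
    simp only [Complex.mul_conj]; exact_mod_cast huv
  funext ⟨i, hin⟩
  rcases lt_or_ge i s with hi | hi
  · obtain ⟨k, rfl | rfl⟩ := Nat.even_or_odd' i
    · have hk : 2 * k + 1 < s := by obtain ⟨r, rfl⟩ := hs; omega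
      rw [twist_apply_two_mul hk hsn, twist_apply_two_mul hk hsn,
        twist_apply_two_mul_add_one hk hsn]
      simp only [map_add, map_mul, map_neg, Complex.conj_conj]
      linear_combination w ⟨2 * k, hin⟩ * hunit
    · have hk : 2 * k + 1 < s := hi
      rw [twist_apply_two_mul_add_one hk hsn, twist_apply_two_mul hk hsn,
        twist_apply_two_mul_add_one hk hsn]
      simp only [map_add, map_mul, Complex.conj_conj]
      linear_combination w ⟨2 * k + 1, hin⟩ * hunit
  · rw [twist_apply_of_le hi, twist_apply_of_le hi, Complex.conj_conj]

lemma sum_normSq_twist (hs : Even s) (hsn : s ≤ n + 1)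
    (huv : Complex.normSq u + Complex.normSq v = 1) :
    ∑ i, Complex.normSq (twist n s u v w i) = ∑ i, Complex.normSq (w i) := by
  simp only [sum_normSq_eq_sum_range_extCoord, ← Finset.sum_range_add_sum_Ico _ hsn]
  obtain ⟨m, rfl⟩ := hs
  congr 1
  · simp only [← two_mul, Finset.sum_range_two_mul]
    refine Finset.sum_congr rfl fun k hk => ?_
    have hk : 2 * k + 1 < 2 * m := by rw [Finset.mem_range] at hk; omega
    rw [extCoord_of_lt (by omega), extCoord_of_lt (by omega), extCoord_of_lt (by omega),
      extCoord_of_lt (by omega), twist_apply_two_mul hk (by omega),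
      twist_apply_two_mul_add_one hk (by omega), normSq_quat_add_normSq_quat, huv, one_mul]
  · refine Finset.sum_congr rfl fun k hk => ?_
    obtain ⟨hsk, hkn⟩ := Finset.mem_Ico.mp hk
    rw [extCoord_of_lt hkn, extCoord_of_lt hkn, twist_apply_of_le hsk,
      Complex.normSq_conj]

end twist

lemma Continuous.twist {X : Type*} [TopologicalSpace X] {n : ℕ} (s : ℕ) {u v : X → ℂ}
    {w : X → Fin (n + 1) → ℂ} (hu : Continuous u) (hv : Continuous v) (hw : Continuous w) :
    Continuous fun x => twist n s (u x) (v x) (w x) := by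
  have hext : ∀ k, Continuous fun x => extCoord n (w x) k := fun k => by
    unfold extCoord
    split_ifs <;> fun_prop
  refine continuous_pi fun i => ?_
  unfold _root_.twist
  split_ifs <;> fun_prop

def spherePair (n : ℕ) : Set ((Fin (n + 1) → ℂ) × (Fin 2 → ℂ)) :=
  {p | (∑ i, Complex.normSq (p.1 i)) = 1 ∧ (∑ j, Complex.normSq (p.2 j)) = 1}

noncomputable def phi (n s : ℕ) (p : (Fin (n + 1) → ℂ) × (Fin 2 → ℂ)) :
    (Fin (n + 1) → ℂ) × (Fin 2 → ℂ) :=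
  (twist n s (p.2 0) (p.2 1) p.1, fun j => conj (p.2 j))

noncomputable def phiInv (n s : ℕ) (p : (Fin (n + 1) → ℂ) × (Fin 2 → ℂ)) :
    (Fin (n + 1) → ℂ) × (Fin 2 → ℂ) :=
  (twist n s (p.2 0) (-conj (p.2 1)) p.1, fun j => conj (p.2 j))

/-- The action `μ` of `T²`; the action `μ'` is the case `s = 0`. -/
def torusAction (n s : ℕ) (t₁ t₂ : Circle) (p : (Fin (n + 1) → ℂ) × (Fin 2 → ℂ)) :
    (Fin (n + 1) → ℂ) × (Fin 2 → ℂ) :=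
  (fun i => if i.1 < s then ((t₁ : ℂ) * t₂) * p.1 i else (t₁ : ℂ) * p.1 i,
   fun j => if j.1 = 0 then ((t₁ : ℂ) ^ 2 * t₂) * p.2 j else (t₂ : ℂ) * p.2 j)

section phi

variable {n s : ℕ} (hs : Even s) (hsn : s ≤ n + 1)

lemma normSq_add_normSq_of_mem_spherePair {p : (Fin (n + 1) → ℂ) × (Fin 2 → ℂ)}
    (hp : p ∈ spherePair n) : Complex.normSq (p.2 0) + Complex.normSq (p.2 1) = 1 := by
  simpa [Fin.sum_univ_two] using hp.2

include hs hsn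

lemma phiInv_phi {p : (Fin (n + 1) → ℂ) × (Fin 2 → ℂ)} (hp : p ∈ spherePair n) :
    phiInv n s (phi n s p) = p := by
  simp only [phi, phiInv, Complex.conj_conj]
  rw [twist_conj_neg_twist hs hsn (normSq_add_normSq_of_mem_spherePair hp)]

lemma phi_phiInv {p : (Fin (n + 1) → ℂ) × (Fin 2 → ℂ)} (hp : p ∈ spherePair n) :
    phi n s (phiInv n s p) = p := by
  have huv : Complex.normSq (p.2 0) + Complex.normSq (-conj (p.2 1)) = 1 := by
    simpa using normSq_add_normSq_of_mem_spherePair hp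
  have key := twist_conj_neg_twist (w := p.1) hs hsn huv
  rw [neg_neg] at key
  simp only [phi, phiInv, Complex.conj_conj, key]

lemma phi_mem_spherePair {p : (Fin (n + 1) → ℂ) × (Fin 2 → ℂ)} (hp : p ∈ spherePair n) :
    phi n s p ∈ spherePair n :=
  ⟨by rw [phi, sum_normSq_twist hs hsn (normSq_add_normSq_of_mem_spherePair hp)]; exact hp.1,
    by simpa [phi, Complex.normSq_conj] using hp.2⟩

lemma phiInv_mem_spherePair {p : (Fin (n + 1) → ℂ) × (Fin 2 → ℂ)} (hp : p ∈ spherePair n) :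
    phiInv n s p ∈ spherePair n := by
  have huv : Complex.normSq (p.2 0) + Complex.normSq (-conj (p.2 1)) = 1 := by
    simpa using normSq_add_normSq_of_mem_spherePair hp
  exact ⟨by rw [phiInv, sum_normSq_twist hs hsn huv]; exact hp.1,
    by simpa [phiInv, Complex.normSq_conj] using hp.2⟩

omit hs hsn in
lemma continuous_phi : Continuous (phi n s) :=
  (Continuous.twist s (by fun_prop) (by fun_prop) (by fun_prop)).prodMk (by fun_prop)

omit hs hsn in
lemma continuous_phiInv : Continuous (phiInv n s) :=
  (Continuous.twist s (by fun_prop) (by fun_prop) (by fun_prop)).prodMk (by fun_prop)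

noncomputable def phiHomeomorph : spherePair n ≃ₜ spherePair n where
  toFun p := ⟨phi n s p, phi_mem_spherePair hs hsn p.2⟩
  invFun p := ⟨phiInv n s p, phiInv_mem_spherePair hs hsn p.2⟩
  left_inv p := Subtype.ext (phiInv_phi hs hsn p.2)
  right_inv p := Subtype.ext (phi_phiInv hs hsn p.2)
  continuous_toFun := (continuous_phi.comp continuous_subtype_val).subtype_mk _
  continuous_invFun := (continuous_phiInv.comp continuous_subtype_val).subtype_mk _

lemma phi_torusAction (t₁ t₂ : Circle) (p : (Fin (n + 1) → ℂ) × (Fin 2 → ℂ)) :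
    phi n s (torusAction n s t₁ t₂ p) = torusAction n 0 t₁⁻¹ t₂⁻¹ (phi n s p) := by
  have hconj (t : Circle) : conj (t : ℂ) = (t : ℂ)⁻¹ := by
    rw [← Circle.coe_inv_eq_conj, Circle.coe_inv]
  have h₁ := Circle.coe_ne_zero t₁
  have h₂ := Circle.coe_ne_zero t₂
  refine Prod.ext (funext fun ⟨i, hin⟩ => ?_) (funext fun j => ?_)
  · simp only [phi, torusAction, Fin.val_zero, Fin.val_one, one_ne_zero, Nat.not_lt_zero,
      ↓reduceIte, Circle.coe_inv]
    rcases lt_or_ge i s with hi | hi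
    · obtain ⟨k, rfl | rfl⟩ := Nat.even_or_odd' i
      · have hk : 2 * k + 1 < s := by obtain ⟨r, rfl⟩ := hs; omega
        rw [twist_apply_two_mul hk hsn, twist_apply_two_mul hk hsn]
        simp only [hi, hk, if_true, map_mul, map_pow, hconj]
        field_simp
      · have hk : 2 * k + 1 < s := hi
        rw [twist_apply_two_mul_add_one hk hsn, twist_apply_two_mul_add_one hk hsn]
        simp only [hk, show 2 * k < s by omega, if_true, map_mul, map_pow, hconj]
        field_simp
    · rw [twist_apply_of_le hi, twist_apply_of_le hi]
      simp only [if_neg (not_lt.mpr hi), map_mul, hconj]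
  · fin_cases j <;> simp [phi, torusAction, hconj]

end phi

theorem stmt15_general (n s : ℕ) (hse : Even s) (hsn : s ≤ n + 1)
    (S : Set ((Fin (n + 1) → ℂ) × (Fin 2 → ℂ)))
    (hS : S = {p | (∑ i, Complex.normSq (p.1 i)) = 1 ∧ (∑ j, Complex.normSq (p.2 j)) = 1})
    (φ : ((Fin (n + 1) → ℂ) × (Fin 2 → ℂ)) → ((Fin (n + 1) → ℂ) × (Fin 2 → ℂ)))
    (hφ : ∀ p, φ p =
      (fun i : Fin (n + 1) =>
        if i.1 < s then
          (if i.1 % 2 = 0 then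
            starRingEnd ℂ (p.2 0) * p.1 i + p.2 1 * starRingEnd ℂ (extCoord n p.1 (i.1 + 1))
          else
            -(p.2 1) * starRingEnd ℂ (extCoord n p.1 (i.1 - 1)) + starRingEnd ℂ (p.2 0) * p.1 i)
        else starRingEnd ℂ (p.1 i),
       fun j => starRingEnd ℂ (p.2 j)))
    (μ μ' : Circle → Circle →
      ((Fin (n + 1) → ℂ) × (Fin 2 → ℂ)) → ((Fin (n + 1) → ℂ) × (Fin 2 → ℂ)))
    (hμ : ∀ t1 t2 p, μ t1 t2 p =
      (fun i => if i.1 < s then ((t1 : ℂ) * (t2 : ℂ)) * p.1 i else (t1 : ℂ) * p.1 i,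
       fun j => if j.1 = 0 then ((t1 : ℂ) ^ 2 * (t2 : ℂ)) * p.2 j else (t2 : ℂ) * p.2 j))
    (hμ' : ∀ t1 t2 p, μ' t1 t2 p =
      (fun i => (t1 : ℂ) * p.1 i,
       fun j => if j.1 = 0 then ((t1 : ℂ) ^ 2 * (t2 : ℂ)) * p.2 j else (t2 : ℂ) * p.2 j)) :
    (∃ h : S ≃ₜ S, ∀ x : S, (h x : (Fin (n + 1) → ℂ) × (Fin 2 → ℂ)) = φ x) ∧
    (∀ (t1 t2 : Circle) (x : (Fin (n + 1) → ℂ) × (Fin 2 → ℂ)),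
      φ (μ t1 t2 x) = μ' t1⁻¹ t2⁻¹ (φ x)) := by
  obtain rfl := hS
  obtain rfl : φ = phi n s := funext hφ
  obtain rfl : μ = torusAction n s := funext fun t₁ => funext fun t₂ => funext (hμ t₁ t₂)
  obtain rfl : μ' = torusAction n 0 := funext fun t₁ => funext fun t₂ => funext fun p => by
    rw [hμ', torusAction]
    simp only [Nat.not_lt_zero, if_false]
  exact ⟨⟨phiHomeomorph hse hsn, fun _ => rfl⟩, phi_torusAction hse hsn⟩

theorem stmt15 (n s : ℕ) (hs : 0 < s) (hse : Even s) (hsn : s ≤ n + 1)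
    (S : Set ((Fin (n + 1) → ℂ) × (Fin 2 → ℂ)))
    (hS : S = {p | (∑ i, Complex.normSq (p.1 i)) = 1 ∧ (∑ j, Complex.normSq (p.2 j)) = 1})
    (φ : ((Fin (n + 1) → ℂ) × (Fin 2 → ℂ)) → ((Fin (n + 1) → ℂ) × (Fin 2 → ℂ)))
    (hφ : ∀ p, φ p =
      (fun i : Fin (n + 1) =>
        if i.1 < s then
          (if i.1 % 2 = 0 then
            starRingEnd ℂ (p.2 0) * p.1 i + p.2 1 * starRingEnd ℂ (extCoord n p.1 (i.1 + 1))
          else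
            -(p.2 1) * starRingEnd ℂ (extCoord n p.1 (i.1 - 1)) + starRingEnd ℂ (p.2 0) * p.1 i)
        else starRingEnd ℂ (p.1 i),
       fun j => starRingEnd ℂ (p.2 j)))
    (μ μ' : Circle → Circle →
      ((Fin (n + 1) → ℂ) × (Fin 2 → ℂ)) → ((Fin (n + 1) → ℂ) × (Fin 2 → ℂ)))
    (hμ : ∀ t1 t2 p, μ t1 t2 p =
      (fun i => if i.1 < s then ((t1 : ℂ) * (t2 : ℂ)) * p.1 i else (t1 : ℂ) * p.1 i,
       fun j => if j.1 = 0 then ((t1 : ℂ) ^ 2 * (t2 : ℂ)) * p.2 j else (t2 : ℂ) * p.2 j))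
    (hμ' : ∀ t1 t2 p, μ' t1 t2 p =
      (fun i => (t1 : ℂ) * p.1 i,
       fun j => if j.1 = 0 then ((t1 : ℂ) ^ 2 * (t2 : ℂ)) * p.2 j else (t2 : ℂ) * p.2 j)) :
    (∃ h : S ≃ₜ S, ∀ x : S, (h x : (Fin (n + 1) → ℂ) × (Fin 2 → ℂ)) = φ x) ∧
    (∀ (t1 t2 : Circle) (x : (Fin (n + 1) → ℂ) × (Fin 2 → ℂ)),
      φ (μ t1 t2 x) = μ' t1⁻¹ t2⁻¹ (φ x)) :=
  stmt15_general n s hse hsn S hS φ hφ μ μ' hμ hμ'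
end

section
/- Let n > 1 and b = (b₁,…,bₙ), b' = (b'₁,…,b'ₙ) ∈ ℤⁿ. The graded rings ℤ[x₁,x₂]/⟨x₁∏ᵢ(x₁+bᵢx₂), x₂²⟩ and ℤ[x₁,x₂]/⟨x₁∏ᵢ(x₁+b'ᵢx₂), x₂²⟩ are isomorphic if and only if there exists ε = ±1 such that ε·Σᵢbᵢ ≡ Σᵢb'ᵢ (mod n+1). -/
open MvPolynomial

/-!
Modulo `x₂²` the relation `x₁ ∏ᵢ (x₁ + bᵢ x₂)` is `x₁ⁿ⁺¹ + (∑ᵢ bᵢ) x₁ⁿ x₂`, so the ring only sees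
`S = ∑ᵢ bᵢ`. A graded isomorphism is a linear substitution `g`. Since `g(x₂)² = g(x₂²)` lies in the
target ideal, which contains no nonzero multiple of `x₁²` when `n > 1`, `g(x₂)` is a multiple of
`x₂`; so `g : x₁ ↦ p x₁ + q x₂, x₂ ↦ s x₂`, and bijectivity forces `p, s = ±1`. Such a `g` sends
`x₁ⁿ⁺¹ + S x₁ⁿ x₂` to `pⁿ⁺¹ x₁ⁿ⁺¹ + pⁿ ((n + 1) q + s S) x₁ⁿ x₂` modulo `x₂²`, so the ideals match
exactly when `(n + 1) q + s S = p S'`, i.e. `p s S ≡ S' (mod n + 1)`; conversely, a congruence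
`ε S ≡ S'` is realised by `p = 1`, `s = ε` and `q` the quotient.
-/

open Finset

namespace MvPolynomial

variable {σ τ R : Type*} [CommSemiring R]

theorem coeff_single_one_mul [DecidableEq σ] (j : σ) (F G : MvPolynomial σ R) :
    coeff (Finsupp.single j 1) (F * G) =
      constantCoeff F * coeff (Finsupp.single j 1) G +
        coeff (Finsupp.single j 1) F * constantCoeff G := by
  rw [coeff_mul, Finsupp.antidiagonal_single, sum_map]
  simp [Nat.antidiagonal_succ, constantCoeff_eq]

theorem constantCoeff_aeval (g : σ → MvPolynomial τ R) (hg : ∀ i, constantCoeff (g i) = 0)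
    (f : MvPolynomial σ R) : constantCoeff (aeval g f) = constantCoeff f := by
  induction f using MvPolynomial.induction_on with
  | C a => simp
  | add f₁ f₂ h₁ h₂ => rw [map_add, map_add, h₁, h₂, map_add]
  | mul_X f i h => rw [map_mul, map_mul, h, aeval_X, hg, map_mul, constantCoeff_X]

theorem coeff_single_one_aeval [Fintype σ] [DecidableEq σ] [DecidableEq τ]
    (g : σ → MvPolynomial τ R) (hg : ∀ i, constantCoeff (g i) = 0) (f : MvPolynomial σ R)
    (j : τ) :
    coeff (Finsupp.single j 1) (aeval g f) =
      ∑ i, coeff (Finsupp.single i 1) f * coeff (Finsupp.single j 1) (g i) := by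
  induction f using MvPolynomial.induction_on with
  | C a => simp [coeff_C, Ne.symm (Finsupp.single_ne_zero.mpr one_ne_zero)]
  | add f₁ f₂ h₁ h₂ => simp only [map_add, coeff_add, h₁, h₂, add_mul, sum_add_distrib]
  | mul_X f i h =>
    simp only [map_mul, aeval_X, coeff_single_one_mul, constantCoeff_aeval g hg]
    simp [hg, coeff_X, Finsupp.single_left_inj]

end MvPolynomial

theorem Ideal.span_pair_eq_of_dvd_sub {R : Type*} [CommRing R] {x x' y : R} (h : y ∣ x - x') :
    Ideal.span {x, y} = Ideal.span {x', y} := by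
  obtain ⟨u, hu⟩ := h
  rw [show x = x' + u * y by linear_combination hu, Ideal.span_pair_add_mul_right]

theorem sq_dvd_mul_prod_sub {R ι : Type*} [CommRing R] (s : Finset ι) (x y a d : R) (c : ι → R) :
    y ^ 2 ∣ (a * x + d * y) * ∏ i ∈ s, (a * x + c i * y) -
      (a ^ (#s + 1) * x ^ (#s + 1) + a ^ #s * (d + ∑ i ∈ s, c i) * x ^ #s * y) := by
  classical
  induction s using Finset.induction_on with
  | empty => simp
  | insert j s hj ih =>
    obtain ⟨u, hu⟩ := ih
    rw [prod_insert hj, sum_insert hj, card_insert_of_notMem hj]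
    exact ⟨c j * a ^ #s * (d + ∑ i ∈ s, c i) * x ^ #s + (a * x + c j * y) * u,
      by linear_combination (a * x + c j * y) * hu⟩

section TwoVariables

variable {R : Type*} [CommRing R] {n : ℕ}

theorem MvPolynomial.IsHomogeneous.exists_eq_C_mul_X_add_C_mul_X {φ : MvPolynomial (Fin 2) R}
    (h : φ.IsHomogeneous 1) :
    ∃ p q, φ = C p * X 0 + C q * X 1 := by
  have : φ ∈ homogeneousSubmodule (Fin 2) R 1 := h
  rw [homogeneousSubmodule_one_eq_span_X, Submodule.mem_span_range_iff_exists_fun] at this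
  obtain ⟨c, rfl⟩ := this
  exact ⟨c 0, c 1, by simp [Fin.sum_univ_two, smul_eq_C_mul]⟩

theorem X_one_sq_dvd_mul_prod_sub {ι : Type*} (s : Finset ι) (p q : R) (c : ι → R) :
    (X 1 : MvPolynomial (Fin 2) R) ^ 2 ∣
      (C p * X 0 + C q * X 1) * ∏ i ∈ s, (C p * X 0 + C (c i) * X 1) -
        (C (p ^ (#s + 1)) * X 0 ^ (#s + 1) + C (p ^ #s * (q + ∑ i ∈ s, c i)) * X 0 ^ #s * X 1) := by
  simpa only [map_pow, map_mul, map_add, map_sum] using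
    sq_dvd_mul_prod_sub s (X 0) (X 1) (C p) (C q) (fun i => C (c i))

/- Compare the coefficients of `x₁ⁿ⁺¹` and `x₁ⁿ x₂`: the multiple of `X 1 ^ 2` contributes to
neither, and the multiple of the first generator only through its constant term. -/
theorem eq_mul_of_mem_span_pair (a t S : R)
    (h : C a * X 0 ^ (n + 1) + C t * X 0 ^ n * X 1 ∈
      Ideal.span {(X 0 : MvPolynomial (Fin 2) R) ^ (n + 1) + C S * X 0 ^ n * X 1, X 1 ^ 2}) :
    t = a * S := by
  set m₁ : Fin 2 →₀ ℕ := Finsupp.single 0 (n + 1)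
  set m₂ : Fin 2 →₀ ℕ := Finsupp.single 0 n + Finsupp.single 1 1
  have e₁ (r : R) : C r * X 0 ^ (n + 1) = monomial m₁ r := by
    rw [X_pow_eq_monomial, C_mul_monomial, mul_one]
  have e₂ (r : R) : C r * X 0 ^ n * X 1 = monomial m₂ r := by
    rw [X_pow_eq_monomial, X, C_mul_monomial, monomial_mul, mul_one, mul_one]
  obtain ⟨A, B, hAB⟩ := Ideal.mem_span_pair.mp h
  rw [e₁ a, ← one_mul (X 0 ^ (n + 1)), ← C_1, e₁, e₂, e₂, X_pow_eq_monomial] at hAB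
  have h₁ : coeff 0 A = a := by
    simpa [m₁, m₂, mul_add, coeff_mul_monomial', coeff_monomial, Finsupp.le_def,
      Fin.forall_fin_two, Finsupp.single_left_inj] using congrArg (coeff m₁) hAB
  have h₂ : coeff 0 A * S = t := by
    simpa [m₁, m₂, mul_add, coeff_mul_monomial', coeff_monomial, Finsupp.le_def,
      Fin.forall_fin_two, Finsupp.single_left_inj] using congrArg (coeff m₂) hAB
  rw [← h₂, h₁]

noncomputable def triangularSubst (p q s : R) : Fin 2 → MvPolynomial (Fin 2) R :=
  ![C p * X 0 + C q * X 1, C s * X 1]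

theorem isHomogeneous_triangularSubst (p q s : R) (i : Fin 2) :
    (triangularSubst p q s i).IsHomogeneous 1 := by
  fin_cases i
  · exact (isHomogeneous_C_mul_X p 0).add (isHomogeneous_C_mul_X q 1)
  · exact isHomogeneous_C_mul_X s 1

theorem aeval_triangularSubst_comp (p q s p' q' s' : R) :
    (aeval (R := R) (triangularSubst p q s)).comp (aeval (R := R) (triangularSubst p' q' s')) =
      aeval (R := R) (triangularSubst (p * p') (p' * q + q' * s) (s * s')) := by
  refine algHom_ext fun i => ?_
  fin_cases i <;> simp [triangularSubst] <;> ring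

theorem aeval_triangularSubst_one_zero_one :
    aeval (R := R) (triangularSubst (1 : R) 0 1) = AlgHom.id R (MvPolynomial (Fin 2) R) := by
  refine algHom_ext fun i => ?_
  fin_cases i <;> simp [triangularSubst]

theorem bijective_aeval_triangularSubst {p q s p' s' : R} (hp : p * p' = 1) (hs : s * s' = 1) :
    Function.Bijective (aeval (R := R) (triangularSubst p q s)) := by
  set q' := -(p' * q * s')
  refine (AlgEquiv.ofAlgHom (aeval (R := R) (triangularSubst p q s))
    (aeval (triangularSubst p' q' s')) ?_ ?_).bijective
  · rw [aeval_triangularSubst_comp, hp, hs,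
      show p' * q + q' * s = 0 by linear_combination (-(p' * q)) * hs,
      aeval_triangularSubst_one_zero_one]
  · rw [aeval_triangularSubst_comp, mul_comm p', mul_comm s', hp, hs,
      show p * q' + q * s' = 0 by linear_combination (-(q * s')) * hp,
      aeval_triangularSubst_one_zero_one]

theorem isUnit_of_surjective_aeval_triangularSubst {p q s : R}
    (h : Function.Surjective (aeval (R := R) (triangularSubst p q s))) : IsUnit p ∧ IsUnit s := by
  have hc (i : Fin 2) : constantCoeff (triangularSubst p q s i) = 0 := by
    fin_cases i <;> simp [triangularSubst]
  have hlin {f y} (hf : aeval (R := R) (triangularSubst p q s) f = y) (j : Fin 2) :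
      coeff (Finsupp.single j 1) y =
        ∑ i, coeff (Finsupp.single i 1) f * coeff (Finsupp.single j 1) (triangularSubst p q s i) :=
    hf ▸ coeff_single_one_aeval _ hc f j
  obtain ⟨f₀, hf₀⟩ := h (X 0)
  obtain ⟨f₁, hf₁⟩ := h (X 1)
  have h₀ : 1 = coeff (Finsupp.single 0 1) f₀ * p := by
    simpa [Fin.sum_univ_two, triangularSubst, coeff_X, coeff_C_mul, Finsupp.single_left_inj]
      using hlin hf₀ 0
  have h₁₀ : 0 = coeff (Finsupp.single 0 1) f₁ * p := by
    simpa [Fin.sum_univ_two, triangularSubst, coeff_X, coeff_C_mul, Finsupp.single_left_inj]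
      using hlin hf₁ 0
  have h₁₁ : 1 = coeff (Finsupp.single 0 1) f₁ * q + coeff (Finsupp.single 1 1) f₁ * s := by
    simpa [Fin.sum_univ_two, triangularSubst, coeff_X, coeff_C_mul, Finsupp.single_left_inj]
      using hlin hf₁ 1
  have hp : IsUnit p := IsUnit.of_mul_eq_one_right _ h₀.symm
  rw [(hp.mul_left_eq_zero).mp h₁₀.symm, zero_mul, zero_add] at h₁₁
  exact ⟨hp, IsUnit.of_mul_eq_one_right _ h₁₁.symm⟩

theorem bijective_aeval_triangularSubst_iff {p q s : R} :
    Function.Bijective (aeval (R := R) (triangularSubst p q s)) ↔ IsUnit p ∧ IsUnit s :=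
  ⟨fun h => isUnit_of_surjective_aeval_triangularSubst h.2,
    fun ⟨hp, hs⟩ => bijective_aeval_triangularSubst hp.mul_val_inv hs.mul_val_inv⟩

/-- The relation ideal of the cohomology ring of `M_{0,b}`, with `x₁ = X 0` and `x₂ = X 1`. -/
noncomputable def bottIdeal (b : Fin n → R) : Ideal (MvPolynomial (Fin 2) R) :=
  Ideal.span {X 0 * ∏ i, (X 0 + C (b i) * X 1), X 1 ^ 2}

theorem bottIdeal_eq_span (b : Fin n → R) :
    bottIdeal b = Ideal.span {X 0 ^ (n + 1) + C (∑ i, b i) * X 0 ^ n * X 1, X 1 ^ 2} := by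
  have h := X_one_sq_dvd_mul_prod_sub univ 1 0 b
  simp only [card_univ, Fintype.card_fin, one_pow, C_1, one_mul, map_zero, zero_mul, add_zero,
    zero_add] at h
  exact Ideal.span_pair_eq_of_dvd_sub h

theorem aeval_triangularSubst_mul_prod (p q s : R) (b : Fin n → R) :
    aeval (R := R) (triangularSubst p q s) (X 0 * ∏ i, (X 0 + C (b i) * X 1)) =
      (C p * X 0 + C q * X 1) * ∏ i, (C p * X 0 + C (q + b i * s) * X 1) := by
  simp only [map_mul, map_prod, map_add, aeval_X, aeval_C, algebraMap_eq, triangularSubst,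
    Matrix.cons_val_zero, Matrix.cons_val_one, Matrix.cons_val_fin_one]
  congr 1
  exact prod_congr rfl fun i _ => by ring

/- Setting `x₂ = 0` sends the ideal into `(Xⁿ⁺¹)`, which contains no nonzero multiple of `X²`. -/
theorem sq_eq_zero_of_sq_mem_bottIdeal (hn : 1 < n) (b : Fin n → R) (r s : R)
    (h : (C r * X 0 + C s * X 1) ^ 2 ∈ bottIdeal b) : r ^ 2 = 0 := by
  rw [bottIdeal_eq_span] at h
  obtain ⟨A, B, hAB⟩ := Ideal.mem_span_pair.mp h
  have hφ : aeval (R := R) ![Polynomial.X, 0] A * Polynomial.X ^ (n + 1) =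
      (Polynomial.C r * Polynomial.X) ^ 2 := by
    simpa using congrArg (aeval (R := R) ![(Polynomial.X : Polynomial R), 0]) hAB
  have hdvd : (Polynomial.X : Polynomial R) ^ (n + 1) ∣ (Polynomial.C r * Polynomial.X) ^ 2 :=
    ⟨_, by rw [← hφ, mul_comm]⟩
  have := Polynomial.X_pow_dvd_iff.mp hdvd 2 (by omega)
  rwa [mul_pow, ← Polynomial.C_pow, Polynomial.coeff_C_mul_X_pow, if_pos rfl] at this

theorem pow_mul_eq_of_aeval_triangularSubst_mem {p q s : R} {b b' : Fin n → R}
    (h : aeval (R := R) (triangularSubst p q s) (X 0 * ∏ i, (X 0 + C (b i) * X 1)) ∈ bottIdeal b') :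
    p ^ n * ((n + 1) * q + s * ∑ i, b i) = p ^ (n + 1) * ∑ i, b' i := by
  rw [aeval_triangularSubst_mul_prod, bottIdeal_eq_span] at h
  have hd := X_one_sq_dvd_mul_prod_sub univ p q (fun i => q + b i * s)
  rw [card_univ, Fintype.card_fin] at hd
  have hX : (X 1 : MvPolynomial (Fin 2) R) ^ 2 ∈
      Ideal.span {X 0 ^ (n + 1) + C (∑ i, b' i) * X 0 ^ n * X 1, X 1 ^ 2} :=
    Ideal.subset_span (by simp)
  have hnf := (Submodule.sub_mem_iff_right _ h).mp (Ideal.mem_of_dvd _ hd hX)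
  rw [← eq_mul_of_mem_span_pair _ _ _ hnf, sum_add_distrib, sum_const, card_univ, Fintype.card_fin,
    ← sum_mul, nsmul_eq_mul]
  ring

end TwoVariables

theorem exists_sign_of_isGradedIso {n : ℕ} (hn : 1 < n) {b b' : Fin n → ℤ}
    (h : IsGradedIso (bottIdeal b) (bottIdeal b')) :
    ∃ ε : ℤ, (ε = 1 ∨ ε = -1) ∧ ε * ∑ i, b i ≡ ∑ i, b' i [ZMOD n + 1] := by
  obtain ⟨g, hhom, hbij, hmap⟩ := h
  have hmem {f} (hf : f ∈ bottIdeal b) : aeval (R := ℤ) g f ∈ bottIdeal b' :=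
    hmap ▸ Ideal.mem_map_of_mem _ hf
  obtain ⟨p, q, hg₀⟩ := (hhom 0).exists_eq_C_mul_X_add_C_mul_X
  obtain ⟨r, s, hg₁⟩ := (hhom 1).exists_eq_C_mul_X_add_C_mul_X
  have hr : r = 0 := by
    refine pow_eq_zero_iff two_ne_zero |>.mp (sq_eq_zero_of_sq_mem_bottIdeal hn b' r s ?_)
    simpa [hg₁] using hmem (Ideal.subset_span (Set.mem_insert_of_mem _ rfl))
  obtain rfl : g = triangularSubst p q s := by
    funext i; fin_cases i <;> simp [triangularSubst, hg₀, hg₁, hr]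
  obtain ⟨hp, hs⟩ := bijective_aeval_triangularSubst_iff.mp hbij
  have hrel :=
    pow_mul_eq_of_aeval_triangularSubst_mem (hmem (Ideal.subset_span (Set.mem_insert _ _)))
  rw [pow_succ, mul_assoc] at hrel
  have hrel' := mul_left_cancel₀ (pow_ne_zero n hp.ne_zero) hrel
  refine ⟨p * s, Int.isUnit_iff.mp (hp.mul hs), Int.modEq_iff_dvd.mpr ⟨p * q, ?_⟩⟩
  linear_combination (-p) * hrel' - (∑ i, b' i) * Int.isUnit_mul_self hp

theorem isGradedIso_of_modEq {n : ℕ} {b b' : Fin n → ℤ} {ε : ℤ} (hε : ε = 1 ∨ ε = -1)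
    (h : ε * ∑ i, b i ≡ ∑ i, b' i [ZMOD n + 1]) : IsGradedIso (bottIdeal b) (bottIdeal b') := by
  obtain ⟨w, hw⟩ := Int.modEq_iff_dvd.mp h
  have hεu : IsUnit ε := Int.isUnit_iff.mpr hε
  refine ⟨triangularSubst 1 w ε, isHomogeneous_triangularSubst 1 w ε,
    bijective_aeval_triangularSubst_iff.mpr ⟨isUnit_one, hεu⟩, ?_⟩
  have hX : aeval (R := ℤ) (triangularSubst 1 w ε) (X 1 ^ 2) = X 1 ^ 2 := by
    simp only [map_pow, aeval_X, triangularSubst, Matrix.cons_val_one, Matrix.cons_val_fin_one]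
    rw [mul_pow, ← C_pow, sq ε, Int.isUnit_mul_self hεu, C_1, one_mul]
  have hsum : 1 ^ n * (w + ∑ i, (w + b i * ε)) = ∑ i, b' i := by
    rw [one_pow, one_mul, sum_add_distrib, sum_const, card_univ, Fintype.card_fin, ← sum_mul,
      nsmul_eq_mul]
    linear_combination -hw
  have hd := X_one_sq_dvd_mul_prod_sub univ 1 w (fun i => w + b i * ε)
  rw [card_univ, Fintype.card_fin, hsum, one_pow] at hd
  rw [bottIdeal, Ideal.map_span, Set.image_pair, hX, aeval_triangularSubst_mul_prod,
    Ideal.span_pair_eq_of_dvd_sub hd, bottIdeal_eq_span, C_1, one_mul]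

theorem stmt19 (n : ℕ) (hn : 1 < n) (b b' : Fin n → ℤ) :
    IsGradedIso
        (Ideal.span {(X 0 : MvPolynomial (Fin 2) ℤ) * ∏ i, (X 0 + C (b i) * X 1), X 1 ^ 2})
        (Ideal.span {(X 0 : MvPolynomial (Fin 2) ℤ) * ∏ i, (X 0 + C (b' i) * X 1), X 1 ^ 2})
    ↔ ∃ ε : ℤ, (ε = 1 ∨ ε = -1) ∧ (ε * ∑ i, b i) ≡ (∑ i, b' i) [ZMOD ((n : ℤ) + 1)] :=
  ⟨exists_sign_of_isGradedIso hn, fun ⟨_, hε, h⟩ => isGradedIso_of_modEq hε h⟩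
end
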